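/- arXiv:2008.07904 — 13 statements merged into one kernel-verified Lean document; each statement's English description precedes it below -/
import Mathlib

section
/- There exists a simple graph G together with a partition P of its vertex set into 3 independent sets of size 3, with exactly 3 pairwise non-adjacent edges between every pair of classes (so G is [3,3,3]-partite with respect to P), such that G has no independent covering with respect to P. -/
/-- `G` admits two orthogonal proper colourings, each using at most `k` colours:
two proper colourings such that no two distinct vertices receive the same pair of colours. -/
def HasOrthColoring {V : Type*} (G : SimpleGraph V) (k : ℕ) : Prop :=
  ∃ c₁ c₂ : V → Fin k,
    (∀ ⦃u v⦄, G.Adj u v → c₁ u ≠ c₁ v) ∧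
    (∀ ⦃u v⦄, G.Adj u v → c₂ u ≠ c₂ v) ∧
    Function.Injective fun v => (c₁ v, c₂ v)

/-- `G` is `[n,k,r]`-partite with respect to the partition `A` of its vertex set:
the classes `A i` partition the vertices, each class has size `k` and is an independent set,
and between every pair of distinct classes there are exactly `r` edges, which are
pairwise non-adjacent (they form a matching). -/
def IsPartiteNKR {V : Type*} (G : SimpleGraph V) (n k r : ℕ) (A : Fin n → Finset V) : Prop :=
  (∀ v : V, ∃! i, v ∈ A i) ∧
  (∀ i, (A i).card = k) ∧
  (∀ i, ∀ u ∈ A i, ∀ v ∈ A i, ¬ G.Adj u v) ∧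
  ∀ i j, i ≠ j →
    {p : V × V | p.1 ∈ A i ∧ p.2 ∈ A j ∧ G.Adj p.1 p.2}.ncard = r ∧
    ∀ p q : V × V,
      p.1 ∈ A i → p.2 ∈ A j → G.Adj p.1 p.2 →
      q.1 ∈ A i → q.2 ∈ A j → G.Adj q.1 q.2 →
      p ≠ q → p.1 ≠ q.1 ∧ p.2 ≠ q.2

/-- `T` is an independent transversal of `G` with respect to the partition `A`:
an independent set containing exactly one vertex from each class. -/
def IsIndepTransversal {V : Type*} {n : ℕ} (G : SimpleGraph V) (A : Fin n → Finset V)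
    (T : Finset V) : Prop :=
  (∀ u ∈ T, ∀ v ∈ T, ¬ G.Adj u v) ∧ ∀ i, ∃! v, v ∈ T ∧ v ∈ A i

/-- `G` has an independent covering with respect to the partition `A`:
a collection of pairwise disjoint independent transversals spanning all vertices. -/
def HasIndepCovering {V : Type*} {n : ℕ} (G : SimpleGraph V) (A : Fin n → Finset V) : Prop :=
  ∃ (m : ℕ) (T : Fin m → Finset V),
    (∀ j, IsIndepTransversal G A (T j)) ∧
    (Pairwise fun j j' => Disjoint (T j) (T j')) ∧
    ∀ v : V, ∃ j, v ∈ T j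


/-!
Take three classes of size 3, joined by the perfect matchings `id`, `id` and a transposition.
An independent covering is a proper colouring that is bijective on every class; comparing the
colourings of two classes gives a permutation of `Fin 3` that disagrees everywhere with the
matching between them. A permutation of `Fin 3` without fixed points is a 3-cycle, hence even,
so each of these permutations has the sign of its matching; but they compose around the
triangle, while the signs of the matchings do not.
-/

open Equiv Equiv.Perm Finset

namespace Equiv.Perm

theorem sign_eq_one_of_forall_apply_ne_self {σ : Perm (Fin 3)} (h : ∀ x, σ x ≠ x) :
    sign σ = 1 := by
  have hsupp : σ.support = univ := by
    ext x
    simp [h x]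
  exact (card_support_eq_three_iff.1 (by rw [hsupp]; rfl)).sign

theorem sign_eq_of_forall_apply_ne {σ ρ : Perm (Fin 3)} (h : ∀ x, σ x ≠ ρ x) :
    sign σ = sign ρ := by
  have := sign_eq_one_of_forall_apply_ne_self (σ := ρ⁻¹ * σ) fun x hx =>
    h x (by rwa [mul_apply, inv_eq_iff_eq] at hx)
  rw [Perm.sign_mul, map_inv, inv_mul_eq_one] at this
  exact this.symm

end Equiv.Perm

theorem HasIndepCovering.exists_coloring_bijOn {V : Type*} {n : ℕ} {G : SimpleGraph V}
    {A : Fin n → Finset V} (h : HasIndepCovering G A) :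
    ∃ (m : ℕ) (c : G.Coloring (Fin m)), ∀ i, Set.BijOn c (A i) Set.univ := by
  obtain ⟨m, T, hT, hdisj, hcov⟩ := h
  choose c hc using hcov
  have hc_eq : ∀ v j, v ∈ T j → c v = j := fun v j hv =>
    by_contra fun hne => disjoint_left.mp (hdisj hne) (hc v) hv
  have hvalid : ∀ {u v}, G.Adj u v → c u ≠ c v := fun {u v} huv hcuv =>
    (hT (c u)).1 u (hc u) v (hcuv ▸ hc v) huv
  refine ⟨m, .mk c hvalid, fun i => ⟨fun _ _ => Set.mem_univ _, ?_, ?_⟩⟩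
  · intro u hu v hv (huv : c u = c v)
    obtain ⟨w, -, hw⟩ := (hT (c u)).2 i
    exact (hw u ⟨hc u, hu⟩).trans (hw v ⟨huv ▸ hc v, hv⟩).symm
  · intro j _
    obtain ⟨w, ⟨hwT, hwA⟩, -⟩ := (hT j).2 i
    exact ⟨w, hwA, hc_eq w j hwT⟩

def finProdClasses (n k : ℕ) : Fin n → Finset (Fin n × Fin k) :=
  fun i => {i} ×ˢ univ

@[simp]
theorem mem_finProdClasses {n k : ℕ} {i : Fin n} {v : Fin n × Fin k} :
    v ∈ finProdClasses n k i ↔ v.1 = i := by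
  simp [finProdClasses, Prod.ext_iff, eq_comm]

theorem bijective_of_bijOn_finProdClasses {n k : ℕ} {β : Type*} {f : Fin n × Fin k → β}
    {i : Fin n} (hf : Set.BijOn f (finProdClasses n k i) Set.univ) :
    Function.Bijective fun x => f (i, x) := by
  refine ⟨fun x y hxy => ?_, fun b => ?_⟩
  · have := hf.injOn (by simp) (by simp) hxy
    exact (Prod.mk.inj this).2
  · obtain ⟨⟨i', x⟩, hx, rfl⟩ := hf.surjOn (Set.mem_univ b)
    rw [SetLike.mem_coe, mem_finProdClasses] at hx
    exact ⟨x, by rw [← hx]⟩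

/-- The classes `finProdClasses n k` joined pairwise by the perfect matchings `π i j`, `i < j`;
the values of `π i j` for `i ≥ j` are ignored. -/
def permMatchingGraph {n k : ℕ} (π : Fin n → Fin n → Perm (Fin k)) :
    SimpleGraph (Fin n × Fin k) :=
  SimpleGraph.fromRel fun u v => u.1 < v.1 ∧ v.2 = π u.1 v.1 u.2

section permMatchingGraph

variable {n k : ℕ} {π : Fin n → Fin n → Perm (Fin k)}

theorem permMatchingGraph_adj_of_lt {i j : Fin n} (hij : i < j) {x y : Fin k} :
    (permMatchingGraph π).Adj (i, x) (j, y) ↔ y = π i j x := by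
  simp [permMatchingGraph, hij, hij.ne, hij.not_gt]

theorem permMatchingGraph_not_adj_self (i : Fin n) (x y : Fin k) :
    ¬ (permMatchingGraph π).Adj (i, x) (i, y) := by
  simp [permMatchingGraph]

theorem permMatchingGraph_exists_perm_adj_iff {i j : Fin n} (hij : i ≠ j) :
    ∃ ρ : Perm (Fin k), ∀ x y, (permMatchingGraph π).Adj (i, x) (j, y) ↔ y = ρ x := by
  rcases hij.lt_or_gt with hlt | hgt
  · exact ⟨π i j, fun x y => permMatchingGraph_adj_of_lt hlt⟩
  · refine ⟨(π j i)⁻¹, fun x y => ?_⟩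
    rw [SimpleGraph.adj_comm, permMatchingGraph_adj_of_lt hgt, eq_inv_iff_eq, eq_comm]

theorem isPartiteNKR_permMatchingGraph (π : Fin n → Fin n → Perm (Fin k)) :
    IsPartiteNKR (permMatchingGraph π) n k k (finProdClasses n k) := by
  refine ⟨fun v => ⟨v.1, by simp, fun i hi => by simp_all⟩, fun i => by simp [finProdClasses], ?_,
    fun i j hij => ?_⟩
  · rintro i ⟨i', x⟩ hx ⟨i'', y⟩ hy
    simp only [mem_finProdClasses] at hx hy
    subst hx hy
    exact permMatchingGraph_not_adj_self _ x y
  obtain ⟨ρ, hρ⟩ := permMatchingGraph_exists_perm_adj_iff (π := π) hij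
  have hedges : {p : (Fin n × Fin k) × (Fin n × Fin k) | p.1 ∈ finProdClasses n k i ∧
      p.2 ∈ finProdClasses n k j ∧ (permMatchingGraph π).Adj p.1 p.2} =
      Set.range fun x => ((i, x), (j, ρ x)) := by
    ext ⟨⟨i', x⟩, ⟨j', y⟩⟩
    simp only [Set.mem_ofPred_eq, mem_finProdClasses, Set.mem_range, Prod.mk.injEq]
    constructor
    · rintro ⟨rfl, rfl, hadj⟩
      exact ⟨x, ⟨rfl, rfl⟩, rfl, ((hρ x y).1 hadj).symm⟩
    · rintro ⟨x, ⟨rfl, rfl⟩, rfl, rfl⟩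
      exact ⟨rfl, rfl, (hρ _ _).2 rfl⟩
  refine ⟨?_, ?_⟩
  · rw [hedges, Set.ncard_range_of_injective, Nat.card_eq_fintype_card, Fintype.card_fin]
    intro x y hxy
    exact (Prod.mk.inj (Prod.mk.inj hxy).1).2
  · rintro ⟨⟨i₁, x₁⟩, ⟨j₁, y₁⟩⟩ ⟨⟨i₂, x₂⟩, ⟨j₂, y₂⟩⟩ hi₁ hj₁ hadj₁ hi₂ hj₂ hadj₂ hne
    simp only [mem_finProdClasses] at hi₁ hj₁ hi₂ hj₂
    subst hi₁ hj₁ hi₂ hj₂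
    rw [hρ] at hadj₁ hadj₂
    subst hadj₁ hadj₂
    have hx : x₁ ≠ x₂ := by rintro rfl; exact hne rfl
    simp [hx]

theorem not_hasIndepCovering_permMatchingGraph {π : Fin 3 → Fin 3 → Perm (Fin 3)}
    (hπ : sign (π 0 2) ≠ sign (π 1 2) * sign (π 0 1)) :
    ¬ HasIndepCovering (permMatchingGraph π) (finProdClasses 3 3) := by
  intro h
  obtain ⟨m, c, hc⟩ := h.exists_coloring_bijOn
  let e : Fin 3 → Fin 3 ≃ Fin m := fun i =>
    Equiv.ofBijective _ (bijective_of_bijOn_finProdClasses (hc i))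
  let s : Fin 3 → Fin 3 → Perm (Fin 3) := fun i j => (e i).trans (e j).symm
  have hs : ∀ i j, i < j → sign (s i j) = sign (π i j) := fun i j hij =>
    sign_eq_of_forall_apply_ne fun x hx => c.valid ((permMatchingGraph_adj_of_lt hij).2 hx)
      ((e j).apply_symm_apply (e i x)).symm
  have hcomp : s 0 2 = s 1 2 * s 0 1 := by
    ext x
    simp [s]
  exact hπ (by rw [← hs 0 2 (by decide), ← hs 1 2 (by decide), ← hs 0 1 (by decide), hcomp,
    Perm.sign_mul])

end permMatchingGraph

/-- There is a `[3,3,3]`-partite graph with no independent covering with respect to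
its given `[3,3,3]`-partition. -/
theorem exists_333_partite_without_indepCovering :
    ∃ (V : Type) (G : SimpleGraph V) (A : Fin 3 → Finset V),
      IsPartiteNKR G 3 3 3 A ∧ ¬ HasIndepCovering G A := by
  let π : Fin 3 → Fin 3 → Perm (Fin 3) := fun i j => if i = 0 ∧ j = 2 then swap 0 1 else 1
  refine ⟨_, _, _, isPartiteNKR_permMatchingGraph π, not_hasIndepCovering_permMatchingGraph ?_⟩
  simp [π]
end

section
/- Let G be the simple graph on the nine vertices {x₀,x₁,x₂,y₀,y₁,y₂,z₀,z₁,z₂} with edge set {x₀y₀, x₁y₁, x₂y₂, x₀z₀, x₁z₁, x₂z₂, y₀z₂, y₁z₁, y₂z₀}, and let P be the partition {{x₀,x₁,x₂},{y₀,y₁,y₂},{z₀,z₁,z₂}}. Then G is [3,3,3]-partite with respect to P, but G has no independent covering with respect to P. -/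
set_option maxRecDepth 100000
set_option maxHeartbeats 1000000
set_option synthInstance.maxSize 1000000
set_option synthInstance.maxHeartbeats 1000000

/-- The concrete graph of Figure 1: vertices `x i = i`, `y i = 3 + i`, `z i = 6 + i`
in `Fin 9`, with edges `x₀y₀, x₁y₁, x₂y₂, x₀z₀, x₁z₁, x₂z₂, y₀z₂, y₁z₁, y₂z₀`. -/
def counterexampleGraph : SimpleGraph (Fin 9) :=
  SimpleGraph.fromEdgeSet
    {s(0, 3), s(1, 4), s(2, 5), s(0, 6), s(1, 7), s(2, 8), s(3, 8), s(4, 7), s(5, 6)}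

/-- The partition `{{x₀,x₁,x₂}, {y₀,y₁,y₂}, {z₀,z₁,z₂}}`. -/
def counterexamplePartition : Fin 3 → Finset (Fin 9) :=
  ![{0, 1, 2}, {3, 4, 5}, {6, 7, 8}]

/-- The 18 ordered pairs of adjacent vertices. -/
def cexE : Finset (Fin 9 × Fin 9) :=
  {(0,3),(1,4),(2,5),(0,6),(1,7),(2,8),(3,8),(4,7),(5,6),
   (3,0),(4,1),(5,2),(6,0),(7,1),(8,2),(8,3),(7,4),(6,5)}

lemma cex_adj_iff (u v : Fin 9) : counterexampleGraph.Adj u v ↔ (u, v) ∈ cexE := by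
  simp only [counterexampleGraph, SimpleGraph.fromEdgeSet_adj, Set.mem_insert_iff,
    Set.mem_singleton_iff, Sym2.eq, Sym2.rel_iff', Prod.mk.injEq, Prod.swap_prod_mk, cexE]
  fin_cases u <;> fin_cases v <;> decide

lemma cex_key (b0 b1 b2 c0 c1 c2 : Fin 9)
    (hb0 : b0 ∈ counterexamplePartition 1) (hb1 : b1 ∈ counterexamplePartition 1)
    (hb2 : b2 ∈ counterexamplePartition 1) (hc0 : c0 ∈ counterexamplePartition 2)
    (hc1 : c1 ∈ counterexamplePartition 2) (hc2 : c2 ∈ counterexamplePartition 2)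
    (h01 : b0 ≠ b1) (h02 : b0 ≠ b2) (h12 : b1 ≠ b2)
    (g01 : c0 ≠ c1) (g02 : c0 ≠ c2) (g12 : c1 ≠ c2)
    (n0 : (0, b0) ∉ cexE) (n1 : (0, c0) ∉ cexE) (n2 : (b0, c0) ∉ cexE)
    (n3 : (1, b1) ∉ cexE) (n4 : (1, c1) ∉ cexE) (n5 : (b1, c1) ∉ cexE)
    (n6 : (2, b2) ∉ cexE) (n7 : (2, c2) ∉ cexE) (n8 : (b2, c2) ∉ cexE) : False := by
  fin_cases hb0 <;> fin_cases hb1 <;> fin_cases hb2 <;>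
    fin_cases hc0 <;> fin_cases hc1 <;> fin_cases hc2 <;>
    revert h01 h02 h12 g01 g02 g12 n0 n1 n2 n3 n4 n5 n6 n7 n8 <;> decide

/-- The graph of Figure 1 is `[3,3,3]`-partite with respect to the partition
`{{x₀,x₁,x₂}, {y₀,y₁,y₂}, {z₀,z₁,z₂}}`, but has no independent covering with
respect to this partition. -/
theorem counterexampleGraph_partite_and_no_indepCovering :
    IsPartiteNKR counterexampleGraph 3 3 3 counterexamplePartition ∧
    ¬ HasIndepCovering counterexampleGraph counterexamplePartition := by
  constructor
  · refine ⟨?_, ?_, ?_, fun i j hij => ⟨?_, ?_⟩⟩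
    · simp only [ExistsUnique]; decide
    · decide
    · simp only [cex_adj_iff]; decide
    · have hset : {p : Fin 9 × Fin 9 | p.1 ∈ counterexamplePartition i ∧
          p.2 ∈ counterexamplePartition j ∧ counterexampleGraph.Adj p.1 p.2} =
          ↑(cexE.filter fun p => p.1 ∈ counterexamplePartition i ∧
            p.2 ∈ counterexamplePartition j) := by
        ext ⟨u, v⟩
        simp [cex_adj_iff]
        tauto
      rw [hset, Set.ncard_coe_finset]
      revert hij
      fin_cases i <;> fin_cases j <;> decide
    · revert hij
      simp only [cex_adj_iff]
      revert i j
      decide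
  · rintro ⟨m, T, hT, hdisj, hcov⟩
    obtain ⟨j0, hj0⟩ := hcov 0
    obtain ⟨j1, hj1⟩ := hcov 1
    obtain ⟨j2, hj2⟩ := hcov 2
    have m0 : (0 : Fin 9) ∈ counterexamplePartition 0 := by decide
    have m1 : (1 : Fin 9) ∈ counterexamplePartition 0 := by decide
    have m2 : (2 : Fin 9) ∈ counterexamplePartition 0 := by decide
    have hne01 : j0 ≠ j1 := fun h => absurd
      (((hT j1).2 0).unique ⟨h ▸ hj0, m0⟩ ⟨hj1, m1⟩) (by decide)
    have hne02 : j0 ≠ j2 := fun h => absurd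
      (((hT j2).2 0).unique ⟨h ▸ hj0, m0⟩ ⟨hj2, m2⟩) (by decide)
    have hne12 : j1 ≠ j2 := fun h => absurd
      (((hT j2).2 0).unique ⟨h ▸ hj1, m1⟩ ⟨hj2, m2⟩) (by decide)
    obtain ⟨b0, ⟨hb0T, hb0A⟩, -⟩ := (hT j0).2 1
    obtain ⟨b1, ⟨hb1T, hb1A⟩, -⟩ := (hT j1).2 1
    obtain ⟨b2, ⟨hb2T, hb2A⟩, -⟩ := (hT j2).2 1
    obtain ⟨c0, ⟨hc0T, hc0A⟩, -⟩ := (hT j0).2 2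
    obtain ⟨c1, ⟨hc1T, hc1A⟩, -⟩ := (hT j1).2 2
    obtain ⟨c2, ⟨hc2T, hc2A⟩, -⟩ := (hT j2).2 2
    have h01 : b0 ≠ b1 := fun h =>
      Finset.disjoint_left.mp (hdisj hne01) hb0T (h ▸ hb1T)
    have h02 : b0 ≠ b2 := fun h =>
      Finset.disjoint_left.mp (hdisj hne02) hb0T (h ▸ hb2T)
    have h12 : b1 ≠ b2 := fun h =>
      Finset.disjoint_left.mp (hdisj hne12) hb1T (h ▸ hb2T)
    have g01 : c0 ≠ c1 := fun h =>
      Finset.disjoint_left.mp (hdisj hne01) hc0T (h ▸ hc1T)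
    have g02 : c0 ≠ c2 := fun h =>
      Finset.disjoint_left.mp (hdisj hne02) hc0T (h ▸ hc2T)
    have g12 : c1 ≠ c2 := fun h =>
      Finset.disjoint_left.mp (hdisj hne12) hc1T (h ▸ hc2T)
    exact cex_key b0 b1 b2 c0 c1 c2 hb0A hb1A hb2A hc0A hc1A hc2A
      h01 h02 h12 g01 g02 g12
      (fun h => (hT j0).1 0 hj0 b0 hb0T ((cex_adj_iff _ _).mpr h))
      (fun h => (hT j0).1 0 hj0 c0 hc0T ((cex_adj_iff _ _).mpr h))
      (fun h => (hT j0).1 b0 hb0T c0 hc0T ((cex_adj_iff _ _).mpr h))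
      (fun h => (hT j1).1 1 hj1 b1 hb1T ((cex_adj_iff _ _).mpr h))
      (fun h => (hT j1).1 1 hj1 c1 hc1T ((cex_adj_iff _ _).mpr h))
      (fun h => (hT j1).1 b1 hb1T c1 hc1T ((cex_adj_iff _ _).mpr h))
      (fun h => (hT j2).1 2 hj2 b2 hb2T ((cex_adj_iff _ _).mpr h))
      (fun h => (hT j2).1 2 hj2 c2 hc2T ((cex_adj_iff _ _).mpr h))
      (fun h => (hT j2).1 b2 hb2T c2 hc2T ((cex_adj_iff _ _).mpr h))
end

section
/- Every [3,3,3]-partite simple graph G satisfies Oχ(G) = 3, i.e. G admits two orthogonal proper colourings each using 3 colours. -/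
/-- Adjacency of the model `[3,3,3]`-partite graph on `Fin 3 × Fin 3` (first coordinate
is the class, second the label), with matchings: identity between classes 0–1 and 0–2,
and `f` between classes 1 and 2. -/
abbrev ConcAdj (f : Fin 3 → Fin 3) (p q : Fin 3 × Fin 3) : Prop :=
  (p.1 = 0 ∧ q.1 = 1 ∧ p.2 = q.2) ∨ (p.1 = 1 ∧ q.1 = 0 ∧ p.2 = q.2) ∨
  (p.1 = 0 ∧ q.1 = 2 ∧ p.2 = q.2) ∨ (p.1 = 2 ∧ q.1 = 0 ∧ p.2 = q.2) ∨
  (p.1 = 1 ∧ q.1 = 2 ∧ q.2 = f p.2) ∨ (p.1 = 2 ∧ q.1 = 1 ∧ p.2 = f q.2)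

instance ConcAdj.dec (f : Fin 3 → Fin 3) (p q : Fin 3 × Fin 3) : Decidable (ConcAdj f p q) := by
  unfold ConcAdj; infer_instance

/-- Table of orthogonal colouring pairs for the model graph, indexed by `f 0` and `f 1`. -/
def tbl : Fin 3 → Fin 3 → Fin 3 → Fin 3 → Fin 3 × Fin 3 :=
  ![![![![(0,0), (0,1), (0,2)], ![(1,1), (1,2), (1,0)], ![(2,2), (2,0), (2,1)]],
    ![![(0,0), (0,1), (0,2)], ![(1,1), (1,2), (1,0)], ![(2,2), (2,0), (2,1)]],
    ![![(0,0), (0,1), (0,2)], ![(1,1), (1,0), (2,0)], ![(2,2), (1,2), (2,1)]]],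
  ![![![(0,0), (0,1), (0,2)], ![(1,1), (2,0), (1,0)], ![(1,2), (2,2), (2,1)]],
    ![![(0,0), (0,1), (0,2)], ![(1,1), (1,2), (1,0)], ![(2,2), (2,0), (2,1)]],
    ![![(0,0), (0,1), (0,2)], ![(1,1), (1,2), (1,0)], ![(2,1), (2,2), (2,0)]]],
  ![![![(0,0), (0,1), (0,2)], ![(1,1), (1,2), (1,0)], ![(2,1), (2,2), (2,0)]],
    ![![(0,0), (0,1), (0,2)], ![(1,1), (1,0), (2,1)], ![(1,2), (2,2), (2,0)]],
    ![![(0,0), (0,1), (0,2)], ![(1,1), (1,2), (1,0)], ![(2,2), (2,0), (2,1)]]]]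

/-- The pair of colourings for the model graph with matching `f`. -/
def CC (f : Fin 3 → Fin 3) (p : Fin 3 × Fin 3) : Fin 3 × Fin 3 :=
  tbl (f 0) (f 1) p.1 p.2

lemma conc_good : ∀ f : Fin 3 → Fin 3, Function.Injective f →
    (∀ p q, ConcAdj f p q → (CC f p).1 ≠ (CC f q).1) ∧
    (∀ p q, ConcAdj f p q → (CC f p).2 ≠ (CC f q).2) ∧
    Function.Injective (CC f) := by decide

/-- Every `[3,3,3]`-partite graph has orthogonal chromatic number exactly `3`. -/
theorem orthChromatic_of_333_partite {V : Type} (G : SimpleGraph V)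
    (h : ∃ A : Fin 3 → Finset V, IsPartiteNKR G 3 3 3 A) :
    IsLeast {k | HasOrthColoring G k} 3 := by
  classical
  obtain ⟨A, hpartEU, hcard, hindep, hmatch⟩ := h
  have h3 : ∀ i : Fin 3, i = 0 ∨ i = 1 ∨ i = 2 := by decide
  have hpart' : ∀ v : V, ∃ i, v ∈ A i ∧ ∀ j, v ∈ A j → j = i := hpartEU
  choose part hmemp huniq using hpart'
  -- cardinality of `V` is 9
  have hdisj : ∀ i j : Fin 3, i ≠ j → Disjoint (A i) (A j) := by
    intro i j hij
    rw [Finset.disjoint_left]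
    intro v hvi hvj
    exact hij ((huniq v i hvi).trans (huniq v j hvj).symm)
  have hV9 : Nat.card V = 9 := by
    have huniv : ((A 0 ∪ A 1 ∪ A 2 : Finset V) : Set V) = Set.univ := by
      ext v
      simp only [Set.mem_univ, iff_true, Finset.coe_union, Set.mem_union, Finset.mem_coe]
      rcases h3 (part v) with hh | hh | hh
      · exact Or.inl (Or.inl (hh ▸ hmemp v))
      · exact Or.inl (Or.inr (hh ▸ hmemp v))
      · exact Or.inr (hh ▸ hmemp v)
    have hd2 : Disjoint (A 0 ∪ A 1) (A 2) :=
      Finset.disjoint_union_left.2 ⟨hdisj 0 2 (by decide), hdisj 1 2 (by decide)⟩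
    calc Nat.card V = (Set.univ : Set V).ncard := (Set.ncard_univ V).symm
      _ = ((A 0 ∪ A 1 ∪ A 2 : Finset V) : Set V).ncard := by rw [huniv]
      _ = (A 0 ∪ A 1 ∪ A 2 : Finset V).card := Set.ncard_coe_finset _
      _ = 9 := by
          rw [Finset.card_union_of_disjoint hd2,
            Finset.card_union_of_disjoint (hdisj 0 1 (by decide)), hcard, hcard, hcard]
  constructor
  · -- `3` is attained
    -- every vertex of `A i` has a unique neighbour in `A j`
    have hEU : ∀ i j : Fin 3, i ≠ j → ∀ u ∈ A i, ∃! v, v ∈ A j ∧ G.Adj u v := by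
      intro i j hij u hu
      obtain ⟨hc3, hmat⟩ := hmatch i j hij
      have hinjOn : Set.InjOn Prod.fst {p : V × V | p.1 ∈ A i ∧ p.2 ∈ A j ∧ G.Adj p.1 p.2} := by
        intro p hp q hq hpq
        by_contra hne
        exact (hmat p q hp.1 hp.2.1 hp.2.2 hq.1 hq.2.1 hq.2.2 hne).1 hpq
      have himg : Prod.fst '' {p : V × V | p.1 ∈ A i ∧ p.2 ∈ A j ∧ G.Adj p.1 p.2}
          = (A i : Set V) := by
        apply Set.eq_of_subset_of_ncard_le
        · rintro x ⟨p, hp, rfl⟩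
          exact hp.1
        · rw [Set.ncard_image_of_injOn hinjOn, hc3, Set.ncard_coe_finset, hcard]
        · exact (A i).finite_toSet
      have hu' : u ∈ Prod.fst '' {p : V × V | p.1 ∈ A i ∧ p.2 ∈ A j ∧ G.Adj p.1 p.2} := by
        rw [himg]; exact hu
      obtain ⟨p, hp, hp1⟩ := hu'
      refine ⟨p.2, ⟨hp.2.1, hp1 ▸ hp.2.2⟩, ?_⟩
      rintro w ⟨hwj, hadj⟩
      by_contra hne
      have hpairs : (u, w) ≠ (u, p.2) := fun he => hne (congrArg Prod.snd he)
      exact (hmat (u, w) (u, p.2) hu hwj hadj hu hp.2.1 (hp1 ▸ hp.2.2) hpairs).1 rfl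
    have h01 : (0 : Fin 3) ≠ 1 := by decide
    have h12 : (1 : Fin 3) ≠ 2 := by decide
    -- neighbour functions
    have hnbE : ∀ (i j : Fin 3), i ≠ j → ∀ v : V, ∃ w, v ∈ A i → w ∈ A j ∧ G.Adj v w := by
      intro i j hij v
      by_cases hv : v ∈ A i
      · obtain ⟨w, hw, -⟩ := hEU i j hij v hv
        exact ⟨w, fun _ => hw⟩
      · exact ⟨v, fun hv' => absurd hv' hv⟩
    choose nb hnb using hnbE
    have hnbU : ∀ (i j : Fin 3) (hij : i ≠ j) (v w : V), v ∈ A i → w ∈ A j → G.Adj v w →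
        w = nb i j hij v := by
      intro i j hij v w hv hw hadj
      exact (hEU i j hij v hv).unique ⟨hw, hadj⟩ (hnb i j hij v hv)
    have hnbinj : ∀ (i j : Fin 3) (hij : i ≠ j) (v w : V), v ∈ A i → w ∈ A i →
        nb i j hij v = nb i j hij w → v = w := by
      intro i j hij v w hv hw he
      have h1 := hnb i j hij v hv
      have h2 := hnb i j hij w hw
      refine (hEU j i hij.symm (nb i j hij v) h1.1).unique ⟨hv, h1.2.symm⟩ ⟨hw, ?_⟩
      rw [he]
      exact h2.2.symm
    -- the `A 0`-label of every vertex
    have hlabE : ∀ v : V, ∃ a, (a ∈ A 0 ∧ (v = a ∨ G.Adj v a)) ∧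
        ∀ b, b ∈ A 0 → (v = b ∨ G.Adj v b) → b = a := by
      intro v
      by_cases hv0 : v ∈ A 0
      · refine ⟨v, ⟨hv0, Or.inl rfl⟩, ?_⟩
        rintro b hb (rfl | hadj)
        · rfl
        · exact absurd hadj (hindep 0 v hv0 b hb)
      · have hpv : part v ≠ 0 := fun hh => hv0 (hh ▸ hmemp v)
        have hmain := hnb (part v) 0 hpv v (hmemp v)
        refine ⟨nb (part v) 0 hpv v, ⟨hmain.1, Or.inr hmain.2⟩, ?_⟩
        rintro b hb (rfl | hadj)
        · exact absurd hb hv0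
        · exact hnbU (part v) 0 hpv v b (hmemp v) hb hadj
    choose lab hP hQ using hlabE
    have labmem : ∀ v, lab v ∈ A 0 := fun v => (hP v).1
    have lab0 : ∀ v, v ∈ A 0 → lab v = v := fun v hv => (hQ v v hv (Or.inl rfl)).symm
    have labAdj : ∀ v, v ∉ A 0 → G.Adj v (lab v) := by
      intro v hv
      rcases (hP v).2 with hh | hh
      · rw [hh] at hv
        exact absurd (labmem v) hv
      · exact hh
    have labeq : ∀ v w, v ∈ A 0 → G.Adj v w → lab w = v :=
      fun v w hv hadj => (hQ w v hv (Or.inr hadj.symm)).symm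
    have labinj : ∀ (i : Fin 3), i ≠ 0 → ∀ v w, v ∈ A i → w ∈ A i → lab v = lab w → v = w := by
      intro i hi v w hv hw hl
      have hv0 : v ∉ A 0 := fun hh => hi ((huniq v i hv).trans (huniq v 0 hh).symm)
      have hw0 : w ∉ A 0 := fun hh => hi ((huniq w i hw).trans (huniq w 0 hh).symm)
      have ha1 : G.Adj (lab v) v := (labAdj v hv0).symm
      have ha2 : G.Adj (lab v) w := by
        rw [hl]
        exact (labAdj w hw0).symm
      exact (hEU 0 i (Ne.symm hi) (lab v) (labmem v)).unique ⟨hv, ha1⟩ ⟨hw, ha2⟩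
    -- the permutation of `A 0` induced by the three matchings
    set pp : V → V := fun a => lab (nb 1 2 h12 (nb 0 1 h01 a)) with hpp
    have hppmem : ∀ a, a ∈ A 0 → pp a ∈ A 0 := fun a _ => labmem _
    have hppinj : ∀ a b, a ∈ A 0 → b ∈ A 0 → pp a = pp b → a = b := by
      intro a b ha hb hab
      have hna := hnb 0 1 h01 a ha
      have hnbb := hnb 0 1 h01 b hb
      have hna2 := hnb 1 2 h12 _ hna.1
      have hnb2 := hnb 1 2 h12 _ hnbb.1
      have e2 : nb 1 2 h12 (nb 0 1 h01 a) = nb 1 2 h12 (nb 0 1 h01 b) :=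
        labinj 2 (by decide) _ _ hna2.1 hnb2.1 hab
      exact hnbinj 0 1 h01 a b ha hb (hnbinj 1 2 h12 _ _ hna.1 hnbb.1 e2)
    -- a labelling of `A 0` by `Fin 3`
    have e0 : {x // x ∈ A 0} ≃ Fin 3 :=
      Fintype.equivFinOfCardEq (by rw [Fintype.card_coe, hcard])
    set ℓ : V → Fin 3 := fun v => if hh : v ∈ A 0 then e0 ⟨v, hh⟩ else 0 with hℓdef
    have hℓeq : ∀ a (ha : a ∈ A 0), ℓ a = e0 ⟨a, ha⟩ := by
      intro a ha
      simp only [hℓdef, dif_pos ha]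
    have hℓinj : ∀ a b, a ∈ A 0 → b ∈ A 0 → ℓ a = ℓ b → a = b := by
      intro a b ha hb hab
      rw [hℓeq a ha, hℓeq b hb] at hab
      exact congrArg Subtype.val (e0.injective hab)
    set f : Fin 3 → Fin 3 := fun x => ℓ (pp ((e0.symm x : {x // x ∈ A 0}) : V)) with hfdef
    have hfℓ : ∀ a (ha : a ∈ A 0), f (ℓ a) = ℓ (pp a) := by
      intro a ha
      rw [hfdef]
      show ℓ (pp ((e0.symm (ℓ a) : {x // x ∈ A 0}) : V)) = ℓ (pp a)
      rw [hℓeq a ha, Equiv.symm_apply_apply]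
    have hfinj : Function.Injective f := by
      intro x y hxy
      have hx := (e0.symm x).2
      have hy := (e0.symm y).2
      have h1 : pp ((e0.symm x : {x // x ∈ A 0}) : V) = pp ((e0.symm y : {x // x ∈ A 0}) : V) :=
        hℓinj _ _ (hppmem _ hx) (hppmem _ hy) hxy
      have h2 : e0.symm x = e0.symm y := Subtype.ext (hppinj _ _ hx hy h1)
      simpa using congrArg e0 h2
    -- transporting adjacency to the model graph
    have key0 : ∀ v w, v ∈ A 0 → G.Adj v w → ℓ (lab w) = ℓ (lab v) := by
      intro v w hv hadj
      rw [labeq v w hv hadj, lab0 v hv]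
    have key12 : ∀ v w, v ∈ A 1 → w ∈ A 2 → G.Adj v w → ℓ (lab w) = f (ℓ (lab v)) := by
      intro v w hv1 hw2 hadj
      have hv0 : v ∉ A 0 := fun hh => h01 ((huniq v 0 hh).trans (huniq v 1 hv1).symm)
      have ha : lab v ∈ A 0 := labmem v
      have hav : G.Adj (lab v) v := (labAdj v hv0).symm
      have hv' : v = nb 0 1 h01 (lab v) := hnbU 0 1 h01 (lab v) v ha hv1 hav
      have hw' : w = nb 1 2 h12 v := hnbU 1 2 h12 v w hv1 hw2 hadj
      have hlw : lab w = pp (lab v) := by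
        rw [hpp]
        show lab w = lab (nb 1 2 h12 (nb 0 1 h01 (lab v)))
        rw [← hv', ← hw']
      rw [hlw]
      exact (hfℓ (lab v) ha).symm
    have hAC : ∀ v w, G.Adj v w →
        ConcAdj f (part v, ℓ (lab v)) (part w, ℓ (lab w)) := by
      intro v w hadj
      have hv := hmemp v
      have hw := hmemp w
      have hne : part v ≠ part w := by
        intro hEqp
        exact hindep (part v) v hv w (hEqp ▸ hw) hadj
      rcases h3 (part v) with hv' | hv' | hv' <;> rcases h3 (part w) with hw' | hw' | hw' <;>
          rw [hv'] at hv <;> rw [hw'] at hw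
      · exact absurd (hv'.trans hw'.symm) hne
      · exact Or.inl ⟨hv', hw', (key0 v w hv hadj).symm⟩
      · exact Or.inr (Or.inr (Or.inl ⟨hv', hw', (key0 v w hv hadj).symm⟩))
      · exact Or.inr (Or.inl ⟨hv', hw', key0 w v hw hadj.symm⟩)
      · exact absurd (hv'.trans hw'.symm) hne
      · exact Or.inr (Or.inr (Or.inr (Or.inr (Or.inl ⟨hv', hw', key12 v w hv hw hadj⟩))))
      · exact Or.inr (Or.inr (Or.inr (Or.inl ⟨hv', hw', key0 w v hw hadj.symm⟩)))
      · exact Or.inr (Or.inr (Or.inr (Or.inr (Or.inr ⟨hv', hw', key12 w v hw hv hadj.symm⟩))))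
      · exact absurd (hv'.trans hw'.symm) hne
    have hΦinj : Function.Injective (fun v : V => (part v, ℓ (lab v))) := by
      intro v w hvw
      have h1 : part v = part w := congrArg Prod.fst hvw
      have h2 : ℓ (lab v) = ℓ (lab w) := congrArg Prod.snd hvw
      have h3' : lab v = lab w := hℓinj _ _ (labmem v) (labmem w) h2
      have hv := hmemp v
      have hw := hmemp w
      rw [← h1] at hw
      rcases h3 (part v) with hh | hh | hh <;> rw [hh] at hv hw
      · rw [← lab0 v hv, ← lab0 w hw, h3']
      · exact labinj 1 (by decide) v w hv hw h3'
      · exact labinj 2 (by decide) v w hv hw h3'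
    obtain ⟨P1, P2, Pinj⟩ := conc_good f hfinj
    refine ⟨fun v => (CC f (part v, ℓ (lab v))).1, fun v => (CC f (part v, ℓ (lab v))).2,
      fun u v hh => P1 _ _ (hAC u v hh), fun u v hh => P2 _ _ (hAC u v hh), ?_⟩
    intro u v huv
    apply hΦinj
    apply Pinj
    exact Prod.ext (congrArg Prod.fst huv) (congrArg Prod.snd huv)
  · -- `3` is a lower bound
    intro k hk
    obtain ⟨c1, c2, -, -, hinj⟩ := hk
    have hle : Nat.card V ≤ Nat.card (Fin k × Fin k) :=
      Nat.card_le_card_of_injective _ hinj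
    rw [hV9, Nat.card_prod, Nat.card_eq_fintype_card, Fintype.card_fin] at hle
    nlinarith [hle]
end

section
/- Every [3,3,3]-partite simple graph is isomorphic to one of the following three graphs: the disjoint union of three triangles K₃ ∪ K₃ ∪ K₃, the cycle C₉ on nine vertices, or the disjoint union K₃ ∪ C₆ of a triangle and a six-cycle. -/
/-- The disjoint union of three triangles, `K₃ ∪ K₃ ∪ K₃`. -/
def tripleTriangle : SimpleGraph (Fin 3 ⊕ (Fin 3 ⊕ Fin 3)) :=
  (⊤ : SimpleGraph (Fin 3)) ⊕g ((⊤ : SimpleGraph (Fin 3)) ⊕g (⊤ : SimpleGraph (Fin 3)))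

/-- The disjoint union `K₃ ∪ C₆` of a triangle and a six-cycle. -/
def triangleUnionHexagon : SimpleGraph (Fin 3 ⊕ Fin 6) :=
  (⊤ : SimpleGraph (Fin 3)) ⊕g SimpleGraph.cycleGraph 6

/-!
Between two classes the `k` edges form a perfect matching, so a `[3,k,k]`-partite graph is a
`k`-fold covering of the triangle on its three classes. Labelling `A 0` by `Fin k` and carrying the
labels along the matchings `A 0 → A 1 → A 2`, the graph becomes the cover of the triangle whose
monodromy is the composite of the three matchings around the triangle. For `k = 3` this
permutation is, up to relabelling, the identity, a transposition or a `3`-cycle, which gives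
`K₃ ∪ K₃ ∪ K₃`, `K₃ ∪ C₆` and `C₉` respectively.
-/

open Equiv Function

instance SimpleGraph.sumDecidableRelAdj {α β : Type*} (G : SimpleGraph α) (H : SimpleGraph β)
    [DecidableRel G.Adj] [DecidableRel H.Adj] : DecidableRel (G ⊕g H).Adj
  | .inl _, .inl _ => decidable_of_iff' _ SimpleGraph.sum_adj_inl
  | .inr _, .inr _ => decidable_of_iff' _ SimpleGraph.sum_adj_inr
  | .inl _, .inr _ => isFalse (by simp)
  | .inr _, .inl _ => isFalse (by simp)

theorem Finset.bijOn_coe_equiv {V κ : Type*} {s : Finset V} (ψ : κ ≃ s) :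
    Set.BijOn (fun a => (ψ a : V)) Set.univ s :=
  ⟨fun a _ => (ψ a).2, fun _ _ _ _ h => ψ.injective (Subtype.ext h),
    fun v hv => ⟨ψ.symm ⟨v, hv⟩, trivial, by simp⟩⟩

theorem bijective_uncurry_of_bijOn {V ι κ : Type*} {A : ι → Finset V}
    (hA : ∀ v, ∃! i, v ∈ A i) {f : ι → κ → V} (hf : ∀ i, Set.BijOn (f i) Set.univ (A i)) :
    Bijective (uncurry f) := by
  constructor
  · rintro ⟨i, a⟩ ⟨j, b⟩ (hab : f i a = f j b)
    obtain rfl : i = j := (hA _).unique ((hf i).mapsTo trivial) (hab ▸ (hf j).mapsTo trivial)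
    simpa using (hf i).injOn trivial trivial hab
  · intro v
    obtain ⟨i, hv, -⟩ := hA v
    obtain ⟨a, -, rfl⟩ := (hf i).surjOn hv
    exact ⟨(i, a), rfl⟩

theorem Equiv.Perm.exists_permCongr_eq_of_fin_three (σ : Perm (Fin 3)) :
    ∃ ρ : Perm (Fin 3), ρ.permCongr σ = 1 ∨ ρ.permCongr σ = swap 0 1 ∨
      ρ.permCongr σ = finRotate 3 := by
  revert σ
  decide

/-- The `k`-fold cover of the triangle `0 - 1 - 2 - 0` with monodromy `σ`: the sheet `a` runs
through `(0, a), (1, a), (2, a)` and continues at `(0, σ a)`. -/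
def coverModel {k : ℕ} (σ : Perm (Fin k)) : SimpleGraph (Fin 3 × Fin k) :=
  SimpleGraph.fromRel fun p q =>
    (p.1 = 0 ∧ q.1 = 1 ∧ p.2 = q.2) ∨ (p.1 = 1 ∧ q.1 = 2 ∧ p.2 = q.2) ∨
      (p.1 = 2 ∧ q.1 = 0 ∧ σ p.2 = q.2)

instance {k : ℕ} (σ : Perm (Fin k)) : DecidableRel (coverModel σ).Adj :=
  inferInstanceAs (DecidableRel (SimpleGraph.fromRel _).Adj)

theorem coverModel_not_adj_of_fst_eq {k : ℕ} (σ : Perm (Fin k)) (i : Fin 3) (a b : Fin k) :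
    ¬ (coverModel σ).Adj (i, a) (i, b) := by
  fin_cases i <;> simp [coverModel]

/-- `(i, a) ↦ 3 a + i`, which walks along the sheets of a cover of the triangle. -/
def coverModelLabel : Fin 3 × Fin 3 ≃ Fin 9 :=
  (prodComm _ _).trans finProdFinEquiv

def coverModelOneIso : coverModel (1 : Perm (Fin 3)) ≃g tripleTriangle :=
  ⟨coverModelLabel.trans <| (finSumFinEquiv (m := 3) (n := 6)).symm.trans <|
    sumCongr (.refl _) (finSumFinEquiv (m := 3) (n := 3)).symm, by unfold tripleTriangle; decide⟩

def coverModelSwapIso : coverModel (swap 0 1 : Perm (Fin 3)) ≃g triangleUnionHexagon :=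
  ⟨coverModelLabel.trans <| (finSumFinEquiv (m := 6) (n := 3)).symm.trans <| sumComm _ _,
    by unfold triangleUnionHexagon; decide⟩

def coverModelFinRotateIso : coverModel (finRotate 3) ≃g SimpleGraph.cycleGraph 9 :=
  ⟨coverModelLabel, by decide⟩

namespace IsPartiteNKR

section Matching

variable {V : Type*} {G : SimpleGraph V} {n k : ℕ} {A : Fin n → Finset V}

theorem not_adj_of_mem (hG : IsPartiteNKR G n k k A) {i : Fin n} {u v : V} (hu : u ∈ A i)
    (hv : v ∈ A i) : ¬ G.Adj u v :=
  hG.2.2.1 i u hu v hv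

theorem existsUnique_adj (hG : IsPartiteNKR G n k k A) {i j : Fin n} (hij : i ≠ j) {u : V}
    (hu : u ∈ A i) : ∃! v, v ∈ A j ∧ G.Adj u v := by
  obtain ⟨-, hcard, -, hedges⟩ := hG
  obtain ⟨hncard, hmatch⟩ := hedges i j hij
  set S : Set (V × V) := {p | p.1 ∈ A i ∧ p.2 ∈ A j ∧ G.Adj p.1 p.2}
  have hinj : Set.InjOn Prod.fst S := fun p hp q hq hpq =>
    by_contra fun hne => (hmatch p q hp.1 hp.2.1 hp.2.2 hq.1 hq.2.1 hq.2.2 hne).1 hpq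
  have himage : Prod.fst '' S = A i :=
    Set.eq_of_subset_of_ncard_le (by rintro _ ⟨p, hp, rfl⟩; exact hp.1)
      (by rw [hinj.ncard_image, hncard, Set.ncard_coe_finset, hcard]) (A i).finite_toSet
  obtain ⟨⟨_, v⟩, ⟨-, hv, hadj⟩, rfl⟩ : u ∈ Prod.fst '' S := himage ▸ hu
  refine ⟨v, ⟨hv, hadj⟩, fun w ⟨hw, hadj'⟩ => by_contra fun hne => ?_⟩
  exact (hmatch (_, w) (_, v) hu hw hadj' hu hv hadj (by simpa using hne)).1 rfl

noncomputable def partner (hG : IsPartiteNKR G n k k A) {i j : Fin n} (hij : i ≠ j) (u : A i) :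
    A j :=
  ⟨(hG.existsUnique_adj hij u.2).exists.choose, (hG.existsUnique_adj hij u.2).exists.choose_spec.1⟩

theorem adj_iff_partner_eq (hG : IsPartiteNKR G n k k A) {i j : Fin n} (hij : i ≠ j) (u : A i)
    (v : A j) : G.Adj u v ↔ hG.partner hij u = v := by
  have hpartner := (hG.existsUnique_adj hij u.2).exists.choose_spec
  refine ⟨fun hadj => Subtype.ext ?_, fun h => h ▸ hpartner.2⟩
  exact (hG.existsUnique_adj hij u.2).unique hpartner ⟨v.2, hadj⟩

noncomputable def matching (hG : IsPartiteNKR G n k k A) {i j : Fin n} (hij : i ≠ j) :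
    A i ≃ A j where
  toFun := hG.partner hij
  invFun := hG.partner hij.symm
  left_inv u := (hG.adj_iff_partner_eq hij.symm _ u).1 <|
    G.adj_symm <| (hG.adj_iff_partner_eq hij u _).2 rfl
  right_inv v := (hG.adj_iff_partner_eq hij _ v).1 <|
    G.adj_symm <| (hG.adj_iff_partner_eq hij.symm v _).2 rfl

theorem adj_iff_matching_eq (hG : IsPartiteNKR G n k k A) {i j : Fin n} (hij : i ≠ j) (u : A i)
    (v : A j) : G.Adj u v ↔ hG.matching hij u = v :=
  hG.adj_iff_partner_eq hij u v

end Matching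

variable {V : Type*} {G : SimpleGraph V} {k : ℕ} {A : Fin 3 → Finset V}

noncomputable def monodromy (hG : IsPartiteNKR G 3 k k A) : Perm (A 0) :=
  (hG.matching (by decide : (0 : Fin 3) ≠ 1)).trans <|
    (hG.matching (by decide : (1 : Fin 3) ≠ 2)).trans (hG.matching (by decide : (2 : Fin 3) ≠ 0))

theorem nonempty_iso_coverModel (hG : IsPartiteNKR G 3 k k A) (e : Fin k ≃ A 0) :
    Nonempty (G ≃g coverModel (e.symm.permCongr hG.monodromy)) := by
  let M₀₁ := hG.matching (by decide : (0 : Fin 3) ≠ 1)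
  let M₁₂ := hG.matching (by decide : (1 : Fin 3) ≠ 2)
  let f : Fin 3 → Fin k → V := ![fun a => e a, fun a => M₀₁ (e a), fun a => M₁₂ (M₀₁ (e a))]
  have hf : ∀ i, Set.BijOn (f i) Set.univ (A i) := by
    intro i
    fin_cases i
    · exact Finset.bijOn_coe_equiv e
    · exact Finset.bijOn_coe_equiv (e.trans M₀₁)
    · exact Finset.bijOn_coe_equiv ((e.trans M₀₁).trans M₁₂)
  have hadj_succ : ∀ i a b, G.Adj (f i a) (f (i + 1) b) ↔
      (coverModel (e.symm.permCongr hG.monodromy)).Adj (i, a) (i + 1, b) := by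
    intro i a b
    fin_cases i <;>
      simp [f, coverModel, monodromy, M₀₁, M₁₂, hG.adj_iff_matching_eq, Equiv.symm_apply_eq]
  refine ⟨SimpleGraph.Iso.symm ⟨Equiv.ofBijective _ (bijective_uncurry_of_bijOn hG.1 hf), ?_⟩⟩
  rintro ⟨i, a⟩ ⟨j, b⟩
  obtain rfl | rfl | rfl : j = i ∨ j = i + 1 ∨ i = j + 1 := by revert i j; decide
  · exact iff_of_false (hG.not_adj_of_mem ((hf _).mapsTo trivial) ((hf _).mapsTo trivial))
      (coverModel_not_adj_of_fst_eq _ _ a b)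
  · exact hadj_succ i a b
  · exact G.adj_comm _ _ |>.trans <| (hadj_succ j b a).trans (SimpleGraph.adj_comm _ _ _)

theorem exists_iso_coverModel_of_three (hG : IsPartiteNKR G 3 3 3 A) :
    ∃ σ : Perm (Fin 3), (σ = 1 ∨ σ = swap 0 1 ∨ σ = finRotate 3) ∧ Nonempty (G ≃g coverModel σ) := by
  let e := ((A 0).equivFinOfCardEq (hG.2.1 0)).symm
  obtain ⟨ρ, hρ⟩ := (e.symm.permCongr hG.monodromy).exists_permCongr_eq_of_fin_three
  refine ⟨_, hρ, ?_⟩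
  convert hG.nonempty_iso_coverModel (ρ.symm.trans e) using 3
  ext
  simp

end IsPartiteNKR

/-- Every `[3,3,3]`-partite graph is isomorphic to `K₃ ∪ K₃ ∪ K₃`, to `C₉`,
or to `K₃ ∪ C₆`. -/
theorem partite_333_iso {V : Type} (G : SimpleGraph V)
    (h : ∃ A : Fin 3 → Finset V, IsPartiteNKR G 3 3 3 A) :
    Nonempty (G ≃g tripleTriangle) ∨
    Nonempty (G ≃g SimpleGraph.cycleGraph 9) ∨
    Nonempty (G ≃g triangleUnionHexagon) := by
  obtain ⟨A, hG⟩ := h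
  obtain ⟨σ, rfl | rfl | rfl, ⟨φ⟩⟩ := hG.exists_iso_coverModel_of_three
  · exact Or.inl ⟨φ.trans coverModelOneIso⟩
  · exact Or.inr (Or.inr ⟨φ.trans coverModelSwapIso⟩)
  · exact Or.inr (Or.inl ⟨φ.trans coverModelFinRotateIso⟩)
end

section
/- The cycle C₉ on nine vertices satisfies Oχ(C₉) = 3; in particular it admits two orthogonal proper colourings with 3 colours, and (having 9 vertices) in any such pair every one of the 9 colour pairs occurs on exactly one vertex. -/
/-- `Oχ(C₉) = 3`, and in any pair of orthogonal proper `3`-colourings of `C₉`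
each of the `9` colour pairs occurs on exactly one of the `9` vertices. -/
theorem orthChromatic_cycleNine :
    IsLeast {k | HasOrthColoring (SimpleGraph.cycleGraph 9) k} 3 ∧
    ∀ c₁ c₂ : Fin 9 → Fin 3,
      (∀ ⦃u v⦄, (SimpleGraph.cycleGraph 9).Adj u v → c₁ u ≠ c₁ v) →
      (∀ ⦃u v⦄, (SimpleGraph.cycleGraph 9).Adj u v → c₂ u ≠ c₂ v) →
      (Function.Injective fun v => (c₁ v, c₂ v)) →
      Function.Bijective fun v => (c₁ v, c₂ v) := by
  constructor
  · constructor
    · refine ⟨![0,1,2,0,1,2,0,1,2], ![0,1,2,1,2,0,2,0,1], ?_, ?_, ?_⟩ <;> decide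
    · rintro k ⟨c₁, c₂, -, -, hinj⟩
      by_contra h
      push_neg at h
      have hcard : Fintype.card (Fin 9) ≤ Fintype.card (Fin k × Fin k) :=
        Fintype.card_le_of_injective _ hinj
      simp [Fintype.card_prod] at hcard
      nlinarith
  · intro c₁ c₂ _ _ hinj
    exact (Fintype.bijective_iff_injective_and_card _).mpr ⟨hinj, by simp⟩
end

section
/- Let k ≥ 1 and let G be a simple graph that is [⌈k/2⌉, k, k]-partite with respect to a partition P of its vertex set. Then G has an independent covering with respect to P. -/
/-- Every `[⌈k/2⌉, k, k]`-partite graph has an independent covering with respect to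
its given `[⌈k/2⌉, k, k]`-partition. -/
theorem indepCovering_of_halfk_k_k_partite (k : ℕ) (hk : 1 ≤ k) {V : Type}
    (G : SimpleGraph V) (A : Fin ((k + 1) / 2) → Finset V)
    (h : IsPartiteNKR G ((k + 1) / 2) k k A) :
    HasIndepCovering G A := by
  classical
  obtain ⟨hmem, hcard, hindep, hmatch⟩ := h
  have hn2 : 2 * ((k + 1) / 2) ≤ k + 1 := by omega
  have hn1 : 1 ≤ (k + 1) / 2 := by omega
  -- every vertex of `A i` has a unique neighbour in `A j` for `j ≠ i`
  have uniqNbr : ∀ i j : Fin ((k + 1) / 2), i ≠ j → ∀ u ∈ A i,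
      ∃! v, v ∈ A j ∧ G.Adj u v := by
    intro i j hij u hu
    obtain ⟨hcnt, hpw⟩ := hmatch i j hij
    have hfin : {p : V × V | p.1 ∈ A i ∧ p.2 ∈ A j ∧ G.Adj p.1 p.2}.Finite := by
      apply Set.finite_of_ncard_ne_zero; rw [hcnt]; omega
    have hEcard : hfin.toFinset.card = k := by
      rw [← Set.ncard_eq_toFinset_card _ hfin, hcnt]
    have hinj : Set.InjOn Prod.fst (hfin.toFinset : Set (V × V)) := by
      intro p hp q hq hpq
      by_contra hne
      simp only [Finset.mem_coe, Set.Finite.mem_toFinset, Set.mem_setOf_eq] at hp hq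
      exact (hpw p q hp.1 hp.2.1 hp.2.2 hq.1 hq.2.1 hq.2.2 hne).1 hpq
    have himg : hfin.toFinset.image Prod.fst = A i := by
      apply Finset.eq_of_subset_of_card_le
      · intro x hx
        obtain ⟨p, hp, rfl⟩ := Finset.mem_image.mp hx
        simp only [Set.Finite.mem_toFinset, Set.mem_setOf_eq] at hp
        exact hp.1
      · rw [Finset.card_image_of_injOn hinj, hEcard, hcard]
    have hu' : u ∈ hfin.toFinset.image Prod.fst := by rw [himg]; exact hu
    obtain ⟨p, hp, hp1⟩ := Finset.mem_image.mp hu'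
    simp only [Set.Finite.mem_toFinset, Set.mem_setOf_eq] at hp
    subst hp1
    refine ⟨p.2, ⟨hp.2.1, hp.2.2⟩, ?_⟩
    intro y hy
    by_contra hne
    exact (hpw (p.1, y) (p.1, p.2) hp.1 hy.1 hy.2 hp.1 hp.2.1 hp.2.2
      (by simp [Prod.ext_iff, hne])).1 rfl
  -- choose the unique-neighbour function
  choose! F hF using uniqNbr
  have hFmem : ∀ i j : Fin ((k + 1) / 2), i ≠ j → ∀ u ∈ A i,
      F i j u ∈ A j ∧ G.Adj u (F i j u) :=
    fun i j hij u hu => (hF i j hij u hu).1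
  have hFuniq : ∀ i j : Fin ((k + 1) / 2), i ≠ j → ∀ u ∈ A i,
      ∀ y, y ∈ A j → G.Adj u y → y = F i j u :=
    fun i j hij u hu y hy hadj => (hF i j hij u hu).2 y ⟨hy, hadj⟩
  -- a base vertex
  have hA0 : (A ⟨0, hn1⟩).Nonempty := by
    rw [← Finset.card_pos, hcard]; omega
  obtain ⟨v₀, -⟩ := hA0
  -- main inductive construction of rainbow proper colourings, class by class
  have KEY : ∀ t, t ≤ (k + 1) / 2 → ∃ g : ℕ → Fin k → V,
      ∀ i, i < t → ∀ (hin : i < (k + 1) / 2),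
        (∀ γ, g i γ ∈ A ⟨i, hin⟩) ∧
        Function.Injective (g i) ∧
        ∀ j, j < i → ∀ γ, ¬ G.Adj (g j γ) (g i γ) := by
    intro t
    induction t with
    | zero => exact fun _ => ⟨fun _ _ => v₀, fun i hi => absurd hi (Nat.not_lt_zero i)⟩
    | succ t ih =>
      intro ht1
      have ht : t < (k + 1) / 2 := ht1
      obtain ⟨g, hg⟩ := ih (le_of_lt ht)
      set tc : Fin ((k + 1) / 2) := ⟨t, ht⟩ with htc
      set Sf : Fin k → Finset V := fun γ =>
        (Finset.univ : Finset (Fin t)).image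
          (fun j => F ⟨j.1, j.2.trans ht⟩ tc (g j.1 γ)) with hSf
      set tset : Fin k → Finset V := fun γ => A tc \ Sf γ with htset
      have hgfull : ∀ j : Fin t,
          (∀ γ, g j.1 γ ∈ A ⟨j.1, j.2.trans ht⟩) ∧
          Function.Injective (g j.1) ∧
          ∀ j', j' < j.1 → ∀ γ, ¬ G.Adj (g j' γ) (g j.1 γ) :=
        fun j => hg j.1 j.2 (j.2.trans ht)
      have hgmem : ∀ (j : Fin t) γ, g j.1 γ ∈ A ⟨j.1, j.2.trans ht⟩ :=
        fun j γ => (hgfull j).1 γ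
      have hjne : ∀ j : Fin t, (⟨j.1, j.2.trans ht⟩ : Fin ((k + 1) / 2)) ≠ tc := by
        intro j
        simp only [htc, ne_eq, Fin.mk.injEq]
        exact j.2.ne
      have hcardS : ∀ γ, (Sf γ).card ≤ t := fun γ =>
        le_trans Finset.card_image_le (by simp)
      have htsub : ∀ γ, tset γ ⊆ A tc := fun γ => Finset.sdiff_subset
      have htlb : ∀ γ, k - t ≤ (tset γ).card := by
        intro γ
        have h1 : (A tc).card - (Sf γ).card ≤ (tset γ).card := Finset.le_card_sdiff _ _
        have h2 := hcardS γ
        rw [hcard] at h1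
        omega
      have hall : ∀ s : Finset (Fin k), s.card ≤ (s.biUnion tset).card := by
        intro s
        rcases s.eq_empty_or_nonempty with rfl | ⟨γ₀, hγ₀⟩
        · simp
        by_cases hs : s.card ≤ k - t
        · calc s.card ≤ k - t := hs
            _ ≤ (tset γ₀).card := htlb γ₀
            _ ≤ (s.biUnion tset).card :=
              Finset.card_le_card (fun x hx => Finset.mem_biUnion.mpr ⟨γ₀, hγ₀, hx⟩)
        · push_neg at hs
          have hsub : A tc ⊆ s.biUnion tset := by
            intro w hw
            set Bw := s.filter (fun γ => w ∈ Sf γ) with hBw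
            have hBwcard : Bw.card ≤ t := by
              have hsubB : Bw ⊆ (Finset.univ : Finset (Fin t)).biUnion
                  (fun j => s.filter (fun γ => F ⟨j.1, j.2.trans ht⟩ tc (g j.1 γ) = w)) := by
                intro γ hγ
                have hγ' := Finset.mem_filter.mp hγ
                obtain ⟨j, -, hj⟩ := Finset.mem_image.mp hγ'.2
                exact Finset.mem_biUnion.mpr ⟨j, Finset.mem_univ j,
                  Finset.mem_filter.mpr ⟨hγ'.1, hj⟩⟩
              have hone : ∀ j : Fin t,
                  (s.filter (fun γ => F ⟨j.1, j.2.trans ht⟩ tc (g j.1 γ) = w)).card ≤ 1 := by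
                intro j
                apply Finset.card_le_one.mpr
                intro γ₁ h₁ γ₂ h₂
                have h₁' := (Finset.mem_filter.mp h₁).2
                have h₂' := (Finset.mem_filter.mp h₂).2
                have ha₁ : G.Adj (g j.1 γ₁) w := by
                  have := (hFmem _ tc (hjne j) _ (hgmem j γ₁)).2
                  rwa [h₁'] at this
                have ha₂ : G.Adj (g j.1 γ₂) w := by
                  have := (hFmem _ tc (hjne j) _ (hgmem j γ₂)).2
                  rwa [h₂'] at this
                have he₁ := hFuniq tc ⟨j.1, j.2.trans ht⟩ (hjne j).symm w hw
                  (g j.1 γ₁) (hgmem j γ₁) ha₁.symm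
                have he₂ := hFuniq tc ⟨j.1, j.2.trans ht⟩ (hjne j).symm w hw
                  (g j.1 γ₂) (hgmem j γ₂) ha₂.symm
                exact (hgfull j).2.1 (he₁.trans he₂.symm)
              calc Bw.card
                  ≤ ((Finset.univ : Finset (Fin t)).biUnion
                      (fun j => s.filter
                        (fun γ => F ⟨j.1, j.2.trans ht⟩ tc (g j.1 γ) = w))).card :=
                    Finset.card_le_card hsubB
                _ ≤ (Finset.univ : Finset (Fin t)).card * 1 :=
                    Finset.card_biUnion_le_card_mul _ _ _ (fun j _ => hone j)
                _ = t := by simp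
            have hex : ∃ γ ∈ s, γ ∉ Bw := by
              by_contra hcon
              push_neg at hcon
              have hss : s ⊆ Bw := fun γ hγ => hcon γ hγ
              have := Finset.card_le_card hss
              omega
            obtain ⟨γ, hγs, hγB⟩ := hex
            have hwS : w ∉ Sf γ := by
              intro hwS
              exact hγB (Finset.mem_filter.mpr ⟨hγs, hwS⟩)
            exact Finset.mem_biUnion.mpr ⟨γ, hγs, Finset.mem_sdiff.mpr ⟨hw, hwS⟩⟩
          calc s.card ≤ Fintype.card (Fin k) := Finset.card_le_univ s
            _ = k := Fintype.card_fin k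
            _ = (A tc).card := (hcard tc).symm
            _ ≤ (s.biUnion tset).card := Finset.card_le_card hsub
      obtain ⟨gn, hgninj, hgnmem⟩ :=
        (Finset.all_card_le_biUnion_card_iff_exists_injective tset).mp hall
      refine ⟨fun i => if i = t then gn else g i, ?_⟩
      intro i hi hin
      by_cases hit : i = t
      · subst hit
        simp only [if_pos rfl]
        refine ⟨fun γ => htsub γ (hgnmem γ), hgninj, ?_⟩
        intro j hj γ hadj
        rw [if_neg (by omega : ¬ j = i)] at hadj
        have hmemS := Finset.mem_sdiff.mp (hgnmem γ)
        have hjn : j < (k + 1) / 2 := by omega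
        have heq : gn γ = F ⟨j, hjn⟩ tc (g j γ) := by
          apply hFuniq ⟨j, hjn⟩ tc
          · simp only [htc, ne_eq, Fin.mk.injEq]; omega
          · exact (hg j hj hjn).1 γ
          · exact hmemS.1
          · exact hadj
        apply hmemS.2
        rw [heq]
        exact Finset.mem_image.mpr ⟨⟨j, hj⟩, Finset.mem_univ _, rfl⟩
      · have hit' : i < t := by omega
        simp only [if_neg hit]
        obtain ⟨h1, h2, h3⟩ := hg i hit' hin
        refine ⟨h1, h2, ?_⟩
        intro j hj γ
        rw [if_neg (by omega : ¬ j = t)]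
        exact h3 j hj γ
  -- assemble the covering
  obtain ⟨g, hg⟩ := KEY ((k + 1) / 2) le_rfl
  have hgA : ∀ (i : Fin ((k + 1) / 2)) γ, g i.1 γ ∈ A i := by
    intro i γ
    have := (hg i.1 i.2 i.2).1 γ
    simpa using this
  have hginj : ∀ i : Fin ((k + 1) / 2), Function.Injective (g i.1) :=
    fun i => (hg i.1 i.2 i.2).2.1
  have hclass : ∀ v (i i' : Fin ((k + 1) / 2)), v ∈ A i → v ∈ A i' → i = i' := by
    intro v i i' hv hv'
    obtain ⟨w, -, huq⟩ := hmem v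
    rw [huq i hv, huq i' hv']
  have hnotAdj : ∀ (i i' : Fin ((k + 1) / 2)) γ, ¬ G.Adj (g i.1 γ) (g i'.1 γ) := by
    intro i i' γ hadj
    rcases lt_trichotomy i.1 i'.1 with hlt | heq | hlt
    · exact (hg i'.1 i'.2 i'.2).2.2 i.1 hlt γ hadj
    · have hii : i = i' := Fin.ext heq
      subst hii
      exact G.irrefl hadj
    · exact (hg i.1 i.2 i.2).2.2 i'.1 hlt γ hadj.symm
  refine ⟨k, fun γ => Finset.univ.image (fun i : Fin ((k + 1) / 2) => g i.1 γ), ?_, ?_, ?_⟩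
  · intro γ
    constructor
    · intro u hu v hv hadj
      obtain ⟨i, -, rfl⟩ := Finset.mem_image.mp hu
      obtain ⟨i', -, rfl⟩ := Finset.mem_image.mp hv
      exact hnotAdj i i' γ hadj
    · intro i
      refine ⟨g i.1 γ, ⟨Finset.mem_image.mpr ⟨i, Finset.mem_univ _, rfl⟩, hgA i γ⟩, ?_⟩
      rintro y ⟨hyT, hyA⟩
      obtain ⟨i', -, rfl⟩ := Finset.mem_image.mp hyT
      rw [hclass _ i' i (hgA i' γ) hyA]
  · intro γ γ' hne
    rw [Finset.disjoint_left]
    intro v hv hv'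
    obtain ⟨i, -, rfl⟩ := Finset.mem_image.mp hv
    obtain ⟨i', -, hii⟩ := Finset.mem_image.mp hv'
    have hieq : i' = i := hclass _ i' i (hii ▸ hgA i' γ') (hgA i γ)
    subst hieq
    exact hne (hginj i' hii).symm
  · intro v
    obtain ⟨i, hi, -⟩ := hmem v
    have himg : Finset.univ.image (fun γ : Fin k => g i.1 γ) = A i := by
      apply Finset.eq_of_subset_of_card_le
      · intro x hx
        obtain ⟨γ, -, rfl⟩ := Finset.mem_image.mp hx
        exact hgA i γ
      · rw [Finset.card_image_of_injective _ (hginj i), Finset.card_univ,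
          Fintype.card_fin, hcard]
    have hvmem : v ∈ Finset.univ.image (fun γ : Fin k => g i.1 γ) := himg ▸ hi
    obtain ⟨γ, -, hγ⟩ := Finset.mem_image.mp hvmem
    exact ⟨γ, Finset.mem_image.mpr ⟨i, Finset.mem_univ _, hγ⟩⟩
end

section
/- Let k ≥ 1, let 0 ≤ r ≤ k, and let 1 ≤ n ≤ ⌈k/2⌉. Then every simple graph that is [n, k, r]-partite with respect to a partition P of its vertex set has an independent covering with respect to P. -/
/-!
Colour the classes one at a time with `k` colours, bijectively on each class and so that
adjacent vertices get different colours; the colour classes are then the required independent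
transversals. When the class `A i` is coloured, each of its vertices has at most one neighbour in
each earlier class, because the edges between two classes form a matching, so at most `n - 1`
colours are forbidden at it; dually each colour is forbidden at at most `n - 1` vertices of `A i`.
As `2 (n - 1) ≤ k`, Hall's condition holds for the allowed (vertex, colour) pairs, and a matching
saturating `A i` is the colouring of the new class.
-/

open Finset

theorem exists_injective_avoiding {α β : Type*} [Fintype β] [DecidableEq β] (S : Finset α)
    (B : α → Finset β) (m : ℕ) (hB : ∀ a ∈ S, #(B a) ≤ m) (hB' : ∀ b, #{a ∈ S | b ∈ B a} ≤ m)
    (hS : #S ≤ Fintype.card β) (hm : 2 * m ≤ Fintype.card β) :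
    ∃ g : S → β, Function.Injective g ∧ ∀ a : S, g a ∉ B a := by
  let t : S → Finset β := fun a => univ \ B a
  suffices hall : ∀ s : Finset S, #s ≤ #(s.biUnion t) by
    obtain ⟨g, hg, hgt⟩ := (all_card_le_biUnion_card_iff_exists_injective t).1 hall
    exact ⟨g, hg, fun a => (mem_sdiff.1 (hgt a)).2⟩
  intro s
  rcases s.eq_empty_or_nonempty with rfl | ⟨a, ha⟩
  · simp
  by_cases hs : #s ≤ Fintype.card β - m
  · calc #s ≤ Fintype.card β - m := hs
      _ ≤ #(t a) := by
        rw [card_sdiff_of_subset (subset_univ _), card_univ]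
        exact Nat.sub_le_sub_left (hB a a.2) _
      _ ≤ #(s.biUnion t) := card_le_card (subset_biUnion_of_mem t ha)
  · -- `s` is larger than `m`, so no colour is forbidden at every vertex of `s`
    have hcover : s.biUnion t = univ := by
      refine eq_univ_of_forall fun b => ?_
      by_contra hb
      have hsub : s.map (Function.Embedding.subtype _) ⊆ {a ∈ S | b ∈ B a} := by
        intro x hx
        obtain ⟨a, ha, rfl⟩ := mem_map.1 hx
        by_contra hab
        exact hb (mem_biUnion.2 ⟨a, ha, by simp_all [t]⟩)
      have := (card_le_card hsub).trans (hB' b)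
      rw [card_map] at this
      omega
    rw [hcover, card_univ]
    exact (card_le_univ s).trans (by simpa using hS)

section GreedyColoring

variable {V : Type*} {n k : ℕ} (G : SimpleGraph V) (A : Fin n → Finset V)

/-- The colour classes of `c` are partial independent transversals of the classes `A i`, `i ∈ I`. -/
def IsPartialTransversalColoring (I : Finset (Fin n)) (c : V → Fin k) : Prop :=
  (∀ i ∈ I, Set.InjOn c (A i)) ∧ ∀ i ∈ I, ∀ j ∈ I, ∀ u ∈ A i, ∀ v ∈ A j, G.Adj u v → c u ≠ c v

variable [DecidableRel G.Adj]

def forbiddenColors (I : Finset (Fin n)) (c : V → Fin k) (v : V) : Finset (Fin k) :=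
  I.biUnion fun j => {u ∈ A j | G.Adj v u}.image c

variable {G A}
variable (hmatch : ∀ i j, i ≠ j → ∀ v ∈ A i, ∀ u ∈ A j, ∀ u' ∈ A j, G.Adj v u → G.Adj v u' → u = u')
include hmatch

lemma card_forbiddenColors_le {I : Finset (Fin n)} (c : V → Fin k) {i : Fin n} (hi : i ∉ I)
    {v : V} (hv : v ∈ A i) : #(forbiddenColors G A I c v) ≤ #I :=
  calc #(forbiddenColors G A I c v) ≤ ∑ j ∈ I, #({u ∈ A j | G.Adj v u}.image c) :=
        card_biUnion_le
    _ ≤ ∑ _j ∈ I, 1 := sum_le_sum fun j hj => card_image_le.trans <| card_le_one.2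
        fun u hu u' hu' => by
          simp only [mem_filter] at hu hu'
          exact hmatch i j (ne_of_mem_of_not_mem hj hi).symm v hv u hu.1 u' hu'.1 hu.2 hu'.2
    _ = #I := by rw [card_eq_sum_ones]

lemma card_filter_mem_forbiddenColors_le {I : Finset (Fin n)} {c : V → Fin k}
    (hc : ∀ j ∈ I, Set.InjOn c (A j)) {i : Fin n} (hi : i ∉ I) (b : Fin k) :
    #{v ∈ A i | b ∈ forbiddenColors G A I c v} ≤ #I := by
  classical
  have hsub : {v ∈ A i | b ∈ forbiddenColors G A I c v} ⊆
      I.biUnion fun j => {v ∈ A i | ∃ u ∈ A j, G.Adj v u ∧ c u = b} := by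
    intro v hv
    simp only [forbiddenColors, mem_filter, mem_biUnion, mem_image] at hv ⊢
    obtain ⟨hvi, j, hj, u, ⟨hu, huv⟩, rfl⟩ := hv
    exact ⟨j, hj, hvi, u, hu, huv, rfl⟩
  -- a colour is used once in each class `A j`, by a vertex with at most one neighbour in `A i`
  calc #{v ∈ A i | b ∈ forbiddenColors G A I c v}
      ≤ ∑ j ∈ I, #{v ∈ A i | ∃ u ∈ A j, G.Adj v u ∧ c u = b} :=
        (card_le_card hsub).trans card_biUnion_le
    _ ≤ ∑ _j ∈ I, 1 := sum_le_sum fun j hj => card_le_one.2 fun v hv v' hv' => by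
        simp only [mem_filter] at hv hv'
        obtain ⟨hvi, u, hu, huv, rfl⟩ := hv
        obtain ⟨hv'i, u', hu', hu'v', hcu⟩ := hv'
        rw [hc j hj hu' hu hcu] at hu'v'
        exact hmatch j i (ne_of_mem_of_not_mem hj hi) u hu v hvi v' hv'i huv.symm hu'v'.symm
    _ = #I := by rw [card_eq_sum_ones]

variable (hdisj : Pairwise fun i j => Disjoint (A i) (A j))
  (hind : ∀ i, ∀ u ∈ A i, ∀ v ∈ A i, ¬ G.Adj u v) (hcard : ∀ i, #(A i) ≤ k) (hnk : 2 * (n - 1) ≤ k)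
include hdisj hind hcard hnk

lemma IsPartialTransversalColoring.exists_insert {I : Finset (Fin n)} {c : V → Fin k}
    (hc : IsPartialTransversalColoring G A I c) {i : Fin n} (hi : i ∉ I) :
    ∃ c' : V → Fin k, IsPartialTransversalColoring G A (insert i I) c' := by
  classical
  have hI : #I ≤ n - 1 := by
    simpa using card_le_card (subset_erase.2 ⟨subset_univ I, hi⟩)
  obtain ⟨g, hg, hgB⟩ := exists_injective_avoiding (A i) (forbiddenColors G A I c) (n - 1)
    (fun v hv => (card_forbiddenColors_le hmatch c hi hv).trans hI)
    (fun b => (card_filter_mem_forbiddenColors_le hmatch hc.1 hi b).trans hI)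
    (by simpa using hcard i) (by simpa using hnk)
  let c' : V → Fin k := fun v => if hv : v ∈ A i then g ⟨v, hv⟩ else c v
  have hc'i : ∀ v (hv : v ∈ A i), c' v = g ⟨v, hv⟩ := fun v hv => dif_pos hv
  have hc'I : ∀ j ∈ I, ∀ v ∈ A j, c' v = c v := fun j hj v hv =>
    dif_neg (disjoint_left.1 (hdisj (ne_of_mem_of_not_mem hj hi)) hv)
  have hnew : ∀ j ∈ I, ∀ u ∈ A i, ∀ v ∈ A j, G.Adj u v → c' u ≠ c' v := by
    intro j hj u hu v hv huv h
    rw [hc'i u hu, hc'I j hj v hv] at h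
    exact hgB ⟨u, hu⟩ (h ▸ mem_biUnion.2 ⟨j, hj, mem_image_of_mem c (mem_filter.2 ⟨hv, huv⟩)⟩)
  refine ⟨c', ?_, ?_⟩
  · simp only [forall_mem_insert]
    refine ⟨fun u hu v hv h => ?_, fun j hj => (hc.1 j hj).congr fun v hv => (hc'I j hj v hv).symm⟩
    rw [hc'i u hu, hc'i v hv] at h
    exact congrArg Subtype.val (hg h)
  · simp only [forall_mem_insert]
    refine ⟨⟨fun u hu v hv huv => absurd huv (hind i u hu v hv), hnew⟩, fun j hj =>
      ⟨fun u hu v hv huv => (hnew j hj v hv u hu huv.symm).symm, fun j' hj' u hu v hv huv => ?_⟩⟩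
    rw [hc'I j hj u hu, hc'I j' hj' v hv]
    exact hc.2 j hj j' hj' u hu v hv huv

theorem exists_isPartialTransversalColoring_univ [NeZero k] :
    ∃ c : V → Fin k, IsPartialTransversalColoring G A univ c := by
  induction (univ : Finset (Fin n)) using Finset.induction_on with
  | empty => exact ⟨0, by simp [IsPartialTransversalColoring]⟩
  | insert i I hi ih =>
    obtain ⟨c, hc⟩ := ih
    exact hc.exists_insert hmatch hdisj hind hcard hnk hi

end GreedyColoring

theorem IsPartialTransversalColoring.hasIndepCovering {V : Type*} {n k : ℕ}
    {G : SimpleGraph V} {A : Fin n → Finset V} {c : V → Fin k}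
    (hc : IsPartialTransversalColoring G A univ c) (hcover : ∀ v, ∃ i, v ∈ A i)
    (hcard : ∀ i, #(A i) = k) : HasIndepCovering G A := by
  classical
  have hsurj : ∀ i, Set.SurjOn c (A i) Set.univ := fun i => by
    simpa using surjOn_of_injOn_of_card_le c (t := univ) (fun _ _ => mem_univ _)
      (hc.1 i (mem_univ i)) (by simp [hcard i])
  refine ⟨k, fun b => {v ∈ univ.biUnion A | c v = b}, fun b => ⟨?_, fun i => ?_⟩, ?_, ?_⟩
  · intro u hu v hv huv
    obtain ⟨i, hui⟩ := hcover u
    obtain ⟨j, hvj⟩ := hcover v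
    exact hc.2 i (mem_univ i) j (mem_univ j) u hui v hvj huv
      ((mem_filter.1 hu).2.trans (mem_filter.1 hv).2.symm)
  · obtain ⟨v, hv, rfl⟩ := hsurj i (Set.mem_univ b)
    refine ⟨v, ⟨mem_filter.2 ⟨mem_biUnion.2 ⟨i, mem_univ i, hv⟩, rfl⟩, hv⟩, ?_⟩
    rintro w ⟨hw, hwi⟩
    exact hc.1 i (mem_univ i) hwi hv (mem_filter.1 hw).2
  · intro b b' hbb'
    exact disjoint_filter.2 fun v _ hb hb' => hbb' (hb.symm.trans hb')
  · intro v
    obtain ⟨i, hvi⟩ := hcover v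
    exact ⟨c v, mem_filter.2 ⟨mem_biUnion.2 ⟨i, mem_univ i, hvi⟩, rfl⟩⟩

namespace IsPartiteNKR

variable {V : Type*} {G : SimpleGraph V} {n k r : ℕ} {A : Fin n → Finset V}

lemma pairwise_disjoint (h : IsPartiteNKR G n k r A) :
    Pairwise fun i j => Disjoint (A i) (A j) := fun _ _ hij =>
  disjoint_left.2 fun v hvi hvj => hij ((h.1 v).unique hvi hvj)

lemma eq_of_adj_of_adj (h : IsPartiteNKR G n k r A) (i j : Fin n) (hij : i ≠ j) (v : V)
    (hv : v ∈ A i) (u : V) (hu : u ∈ A j) (u' : V) (hu' : u' ∈ A j) (hvu : G.Adj v u)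
    (hvu' : G.Adj v u') : u = u' := by
  by_contra hne
  exact ((h.2.2.2 i j hij).2 (v, u) (v, u') hv hu hvu hv hu' hvu'
    fun heq => hne (congrArg Prod.snd heq)).1 rfl

end IsPartiteNKR

theorem indepCovering_of_nkr_partite_general (k r n : ℕ) (hk : 1 ≤ k)
    (hn' : n ≤ (k + 1) / 2) {V : Type}
    (G : SimpleGraph V) (A : Fin n → Finset V) (h : IsPartiteNKR G n k r A) :
    HasIndepCovering G A := by
  classical
  have : NeZero k := ⟨by omega⟩
  obtain ⟨c, hc⟩ := exists_isPartialTransversalColoring_univ h.eq_of_adj_of_adj h.pairwise_disjoint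
    h.2.2.1 (fun i => (h.2.1 i).le) (by omega)
  exact hc.hasIndepCovering (fun v => (h.1 v).exists) h.2.1

/-- For `1 ≤ n ≤ ⌈k/2⌉` and `r ≤ k`, every `[n, k, r]`-partite graph has an independent
covering with respect to its given `[n, k, r]`-partition. -/
theorem indepCovering_of_nkr_partite (k r n : ℕ) (hk : 1 ≤ k) (hr : r ≤ k)
    (hn : 1 ≤ n) (hn' : n ≤ (k + 1) / 2) {V : Type}
    (G : SimpleGraph V) (A : Fin n → Finset V) (h : IsPartiteNKR G n k r A) :
    HasIndepCovering G A :=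
  indepCovering_of_nkr_partite_general k r n hk hn' G A h
end

section
/- Let m ≥ 4 be even and set N = ⌈√m⌉. Then Oχ(D_m) = N if and only if m < N² − 1. -/
/-- The double star `D_m` with `m = 2 * (l + 1)` vertices: two centres `(0, none)` and
`(1, none)` joined by an edge, each adjacent to its own `l = m/2 - 1` leaves. -/
def doubleStar (l : ℕ) : SimpleGraph (Fin 2 × Option (Fin l)) :=
  SimpleGraph.fromRel fun a b =>
    (a = (0, none) ∧ b = (1, none)) ∨
    (a.2 = none ∧ b.1 = a.1 ∧ b.2 ≠ none)

open Finset

theorem Finset.exists_disjoint_subsets_card_eq {α : Type*} [DecidableEq α] {s t : Finset α}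
    {l : ℕ} (hs : l ≤ #s) (ht : l ≤ #t) (hst : 2 * l ≤ #(s ∪ t)) :
    ∃ s' ⊆ s, ∃ t' ⊆ t, Disjoint s' t' ∧ #s' = l ∧ #t' = l := by
  by_cases hst' : l ≤ #(s \ t)
  · obtain ⟨s', hs', rfl⟩ := exists_subset_card_eq hst'
    obtain ⟨t', ht', ht'l⟩ := exists_subset_card_eq ht
    refine ⟨s', hs'.trans sdiff_subset, t', ht', ?_, rfl, ht'l⟩
    exact disjoint_of_subset_left hs' (disjoint_of_subset_right ht' sdiff_disjoint)
  · -- put all of `s \ t` into `s'`, so that `s'` meets `t` in at most `l - #(s \ t)` points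
    obtain ⟨s', hs's, hs', hs'l⟩ :=
      exists_subsuperset_card_eq sdiff_subset (le_of_not_ge hst') hs
    have hmeet : #(t ∩ s') ≤ l - #(s \ t) := by
      rw [← hs'l, ← card_sdiff_of_subset hs's]
      refine card_le_card fun x hx => ?_
      simp only [mem_inter, mem_sdiff] at hx ⊢
      tauto
    have hrest : l ≤ #(t \ s') := by
      have := card_sdiff_add_card s t
      have := card_sdiff_add_card_inter t s'
      omega
    obtain ⟨t', ht', rfl⟩ := exists_subset_card_eq hrest
    exact ⟨s', hs', t', ht'.trans sdiff_subset, disjoint_of_subset_right ht' disjoint_sdiff,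
      hs'l, rfl⟩

theorem Finset.exists_injective_forall_mem_of_card_eq {α : Type*} {s : Finset α} {l : ℕ}
    (hs : #s = l) : ∃ f : Fin l → α, Function.Injective f ∧ ∀ i, f i ∈ s :=
  ⟨fun i => (s.equivFinOfCardEq hs).symm i,
    Subtype.val_injective.comp (s.equivFinOfCardEq hs).symm.injective, fun i => by simp⟩

theorem Nat.ceil_sqrt_le_iff {m k : ℕ} : ⌈Real.sqrt m⌉₊ ≤ k ↔ m ≤ k ^ 2 := by
  rw [Nat.ceil_le, Real.sqrt_le_iff]
  exact ⟨fun h => by exact_mod_cast h.2, fun h => ⟨by positivity, by exact_mod_cast h⟩⟩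

theorem HasOrthColoring.card_add_two_le_sq {V : Type*} [Fintype V] {G : SimpleGraph V} {k : ℕ}
    (h : HasOrthColoring G k) {u w : V} (huw : G.Adj u w) (hdom : ∀ v, G.Adj u v ∨ G.Adj w v) :
    Fintype.card V + 2 ≤ k ^ 2 := by
  classical
  obtain ⟨c₁, c₂, h₁, h₂, hinj⟩ := h
  set unused : Finset (Fin k × Fin k) := {(c₁ u, c₂ w), (c₁ w, c₂ u)}
  have hunused : #unused = 2 := card_pair fun h => h₁ huw (congrArg Prod.fst h)
  have hmaps : Set.MapsTo (fun v => (c₁ v, c₂ v)) ((univ : Finset V) : Set V)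
      ((univ \ unused : Finset (Fin k × Fin k)) : Set (Fin k × Fin k)) := by
    intro v _
    simp only [coe_sdiff, coe_univ, Set.mem_sdiff, Set.mem_univ, true_and, unused, coe_insert,
      coe_singleton, Set.mem_insert_iff, Set.mem_singleton_iff, Prod.ext_iff, not_or, not_and]
    rcases hdom v with huv | hwv
    · exact ⟨fun h => absurd h (h₁ huv).symm, fun _ h => absurd h (h₂ huv).symm⟩
    · exact ⟨fun _ h => absurd h (h₂ hwv).symm, fun h => absurd h (h₁ hwv).symm⟩
  have hV := card_le_card_of_injOn _ hmaps hinj.injOn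
  have hk := card_le_univ unused
  rw [card_univ, card_sdiff_of_subset (subset_univ _), card_univ] at hV
  rw [sq, ← Fintype.card_fin k, ← Fintype.card_prod]
  omega

section LeafPairs

variable {k : ℕ} {a b : Fin k}

/-- The pairs available to the leaves of a centre coloured `(a, a)` when the other centre is
coloured `(b, b)`. -/
def leafPairs (a b : Fin k) : Finset (Fin k × Fin k) :=
  (({a}ᶜ : Finset (Fin k)) ×ˢ {a}ᶜ).erase (b, b)

theorem card_leafPairs (hab : a ≠ b) : #(leafPairs a b) = (k - 1) * (k - 1) - 1 := by
  rw [leafPairs, card_erase_of_mem (by simpa using hab.symm), card_product, card_compl,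
    card_singleton, Fintype.card_fin]

theorem leafPairs_union_leafPairs (hab : a ≠ b) :
    leafPairs a b ∪ leafPairs b a = (({a, b} : Finset (Fin k)) ×ˢ {a, b})ᶜ := by
  ext ⟨x, y⟩
  simp only [leafPairs, mem_union, mem_erase, mem_product, mem_compl, mem_singleton,
    mem_insert, ne_eq, Prod.mk.injEq]
  grind

theorem card_leafPairs_union_leafPairs (hab : a ≠ b) :
    #(leafPairs a b ∪ leafPairs b a) = k * k - 4 := by
  rw [leafPairs_union_leafPairs hab, card_compl, card_product, card_pair hab, Fintype.card_prod,
    Fintype.card_fin]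

end LeafPairs

section DoubleStar

variable {l : ℕ}

theorem doubleStar_adj_centres : (doubleStar l).Adj (0, none) (1, none) := by
  simp [doubleStar]

theorem doubleStar_adj_leaf (s : Fin 2) (i : Fin l) :
    (doubleStar l).Adj (s, none) (s, some i) := by
  simp [doubleStar]

theorem doubleStar_adj_centre_or_adj_centre (v : Fin 2 × Option (Fin l)) :
    (doubleStar l).Adj (0, none) v ∨ (doubleStar l).Adj (1, none) v := by
  obtain ⟨s, _ | i⟩ := v <;> fin_cases s
  · exact .inr doubleStar_adj_centres.symm
  · exact .inl doubleStar_adj_centres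
  · exact .inl (doubleStar_adj_leaf 0 i)
  · exact .inr (doubleStar_adj_leaf 1 i)

theorem doubleStar_map_ne_of_adj {α : Type*} {c : Fin 2 × Option (Fin l) → α}
    (hcentres : c (0, none) ≠ c (1, none)) (hleaf : ∀ s i, c (s, none) ≠ c (s, some i))
    ⦃x y : Fin 2 × Option (Fin l)⦄ (h : (doubleStar l).Adj x y) : c x ≠ c y := by
  suffices key : ∀ x y : Fin 2 × Option (Fin l),
      (x = (0, none) ∧ y = (1, none)) ∨ (x.2 = none ∧ y.1 = x.1 ∧ y.2 ≠ none) → c x ≠ c y by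
    obtain ⟨-, hxy | hyx⟩ := (SimpleGraph.fromRel_adj _ _ _).1 h
    exacts [key x y hxy, (key y x hyx).symm]
  rintro ⟨s, o⟩ ⟨t, o'⟩ (⟨hx, hy⟩ | ⟨rfl : o = none, rfl : t = s, ho'⟩)
  · rw [hx, hy]
    exact hcentres
  · obtain ⟨i, rfl⟩ := Option.ne_none_iff_exists'.1 ho'
    exact hleaf t i

variable {k : ℕ}

def doubleStarPairing (a b : Fin k) (f g : Fin l → Fin k × Fin k) :
    Fin 2 × Option (Fin l) → Fin k × Fin k
  | (0, none) => (a, a)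
  | (1, none) => (b, b)
  | (0, some i) => f i
  | (1, some i) => g i

theorem hasOrthColoring_doubleStar_of_leafPairs {a b : Fin k} (hab : a ≠ b)
    {f g : Fin l → Fin k × Fin k} (hf : Function.Injective f) (hg : Function.Injective g)
    (hfa : ∀ i, f i ∈ leafPairs a b) (hgb : ∀ i, g i ∈ leafPairs b a) (hfg : ∀ i j, f i ≠ g j) :
    HasOrthColoring (doubleStar l) k := by
  simp only [leafPairs, mem_erase, mem_product, mem_compl, mem_singleton] at hfa hgb
  have hleaf (s : Fin 2) (i : Fin l) :
      (doubleStarPairing a b f g (s, none)).1 ≠ (doubleStarPairing a b f g (s, some i)).1 ∧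
      (doubleStarPairing a b f g (s, none)).2 ≠ (doubleStarPairing a b f g (s, some i)).2 := by
    fin_cases s
    · exact ⟨Ne.symm (hfa i).2.1, Ne.symm (hfa i).2.2⟩
    · exact ⟨Ne.symm (hgb i).2.1, Ne.symm (hgb i).2.2⟩
  refine ⟨fun v => (doubleStarPairing a b f g v).1, fun v => (doubleStarPairing a b f g v).2,
    doubleStar_map_ne_of_adj hab fun s i => (hleaf s i).1,
    doubleStar_map_ne_of_adj hab fun s i => (hleaf s i).2, ?_⟩
  rintro ⟨s, _ | i⟩ ⟨t, _ | j⟩ h <;> fin_cases s <;> fin_cases t <;>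
    simp only [doubleStarPairing, Prod.mk.eta, Prod.mk.injEq] at h ⊢ <;> grind

theorem hasOrthColoring_doubleStar_iff :
    HasOrthColoring (doubleStar l) k ↔ 2 * l + 4 ≤ k ^ 2 := by
  refine ⟨fun h => ?_, fun hk => ?_⟩
  · have := h.card_add_two_le_sq doubleStar_adj_centres doubleStar_adj_centre_or_adj_centre
    simp only [Fintype.card_prod, Fintype.card_fin, Fintype.card_option] at this
    linarith
  obtain ⟨n, rfl⟩ := Nat.exists_eq_add_of_le' (show 2 ≤ k by nlinarith)
  have hab : (0 : Fin (n + 2)) ≠ 1 := by simp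
  have hA : l ≤ #(leafPairs (0 : Fin (n + 2)) 1) := by
    rw [card_leafPairs hab, show n + 2 - 1 = n + 1 from rfl]
    ring_nf at hk ⊢
    omega
  have hB : l ≤ #(leafPairs (1 : Fin (n + 2)) 0) := by
    rwa [card_leafPairs hab.symm, ← card_leafPairs hab]
  have hAB : 2 * l ≤ #(leafPairs (0 : Fin (n + 2)) 1 ∪ leafPairs 1 0) := by
    rw [card_leafPairs_union_leafPairs hab]
    ring_nf at hk ⊢
    omega
  obtain ⟨S, hSA, T, hTB, hST, hS, hT⟩ := exists_disjoint_subsets_card_eq hA hB hAB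
  obtain ⟨f, hf, hfS⟩ := exists_injective_forall_mem_of_card_eq hS
  obtain ⟨g, hg, hgT⟩ := exists_injective_forall_mem_of_card_eq hT
  exact hasOrthColoring_doubleStar_of_leafPairs hab hf hg (fun i => hSA (hfS i))
    (fun i => hTB (hgT i)) fun i j => disjoint_iff_ne.1 hST _ (hfS i) _ (hgT j)

end DoubleStar

/-- For even `m ≥ 4` and `N = ⌈√m⌉`, the double star `D_m` (here `doubleStar (m/2 - 1)`)
satisfies `Oχ(D_m) = N` if and only if `m < N² - 1`. -/
theorem orthChromatic_doubleStar_iff (m : ℕ) (hm : 4 ≤ m) (hme : Even m)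
    (N : ℕ) (hN : N = ⌈Real.sqrt m⌉₊) :
    IsLeast {k | HasOrthColoring (doubleStar (m / 2 - 1)) k} N ↔ m < N ^ 2 - 1 := by
  obtain ⟨t, rfl⟩ := hme
  have hset :
      {k | HasOrthColoring (doubleStar ((t + t) / 2 - 1)) k} = {k | t + t + 2 ≤ k ^ 2} := by
    ext k
    rw [Set.mem_ofPred_eq, Set.mem_ofPred_eq, hasOrthColoring_doubleStar_iff]
    omega
  rw [hset]
  constructor
  · rintro ⟨hN2, -⟩
    rw [Set.mem_ofPred_eq] at hN2
    omega
  · intro hlt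
    refine ⟨by rw [Set.mem_ofPred_eq]; omega, fun k hk => ?_⟩
    rw [Set.mem_ofPred_eq] at hk
    rw [hN, Nat.ceil_sqrt_le_iff]
    omega
end

section
/- Let m ≥ 4 be even and set N = ⌈√m⌉. If m < N² − 1, then the double star D_m admits two orthogonal proper colourings each using at most N colours (so Oχ(D_m) = N). -/
namespace DSAux

/-- Leaf colour code: side `s` (0 or 1), leaf index `i`, parameter `t = N - 2`. -/
def pcL (t s i : ℕ) : ℕ × ℕ :=
  if s = 0 then
    if i < t then (1, i + 2)
    else if i < 2*t then (i - t + 2, 1)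
    else (2 + (i - 2*t)/t, 2 + (i - 2*t) % t)
  else
    if i < t then (0, i + 2)
    else if i < 2*t then (i - t + 2, 0)
    else (2 + (t*t - 1 - (i - 2*t))/t, 2 + (t*t - 1 - (i - 2*t)) % t)

lemma pcL_lt (t s i : ℕ) (ht : 1 ≤ t) (hi : i < t*t + 2*t) :
    (pcL t s i).1 < t + 2 ∧ (pcL t s i).2 < t + 2 := by
  have htt : 1*1 ≤ t*t := Nat.mul_le_mul ht ht
  have hdiv : ∀ a, a < t*t → 2 + a/t < t + 2 := fun a ha => by
    have h2 : a / t < t := (Nat.div_lt_iff_lt_mul ht).2 (by omega)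
    set d := a / t
    clear_value d
    omega
  have hmod : ∀ a, 2 + a % t < t + 2 := fun a => by
    have h2 := Nat.mod_lt a ht
    set r := a % t
    clear_value r
    omega
  unfold pcL
  split_ifs <;>
    refine ⟨?_, ?_⟩ <;> dsimp only <;>
    first
      | omega
      | exact hdiv _ (by omega)
      | exact hmod _

lemma pcL_zero_ne (t i : ℕ) : (pcL t 0 i).1 ≠ 0 ∧ (pcL t 0 i).2 ≠ 0 := by
  unfold pcL
  rw [if_pos rfl]
  set d := (i - 2*t)/t
  set r := (i - 2*t)%t
  clear_value d r
  split_ifs <;> refine ⟨?_, ?_⟩ <;> dsimp only <;> omega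

lemma pcL_one_ne (t i : ℕ) : (pcL t 1 i).1 ≠ 1 ∧ (pcL t 1 i).2 ≠ 1 := by
  unfold pcL
  rw [if_neg (by norm_num : ¬(1 : ℕ) = 0)]
  set d := (t*t - 1 - (i - 2*t))/t
  set r := (t*t - 1 - (i - 2*t))%t
  clear_value d r
  split_ifs <;> refine ⟨?_, ?_⟩ <;> dsimp only <;> omega

lemma pcL_ne_center (t s i : ℕ) (hs : s < 2) :
    pcL t s i ≠ (0, 0) ∧ pcL t s i ≠ (1, 1) := by
  unfold pcL
  set d1 := (i - 2*t)/t
  set r1 := (i - 2*t)%t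
  set d3 := (t*t - 1 - (i - 2*t))/t
  set r3 := (t*t - 1 - (i - 2*t))%t
  clear_value d1 r1 d3 r3
  interval_cases s <;>
    split_ifs <;>
      constructor <;> intro h <;> rw [Prod.mk.injEq] at h <;> omega

lemma pcL_inj (t l s s' i j : ℕ) (ht : 1 ≤ t) (hs : s < 2) (hs' : s' < 2)
    (hi : i < l) (hj : j < l) (hl2 : 2*l ≤ t*t + 4*t)
    (h : pcL t s i = pcL t s' j) : s = s' ∧ i = j := by
  unfold pcL at h
  have e1 := Nat.div_add_mod (i - 2*t) t
  have e2 := Nat.div_add_mod (j - 2*t) t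
  have e3 := Nat.div_add_mod (t*t - 1 - (i - 2*t)) t
  have e4 := Nat.div_add_mod (t*t - 1 - (j - 2*t)) t
  have m1 : (i - 2*t) % t < t := Nat.mod_lt _ ht
  have m2 : (j - 2*t) % t < t := Nat.mod_lt _ ht
  have m3 : (t*t - 1 - (i - 2*t)) % t < t := Nat.mod_lt _ ht
  have m4 : (t*t - 1 - (j - 2*t)) % t < t := Nat.mod_lt _ ht
  set d1 := (i - 2*t)/t
  set r1 := (i - 2*t)%t
  set d2 := (j - 2*t)/t
  set r2 := (j - 2*t)%t
  set d3 := (t*t - 1 - (i - 2*t))/t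
  set r3 := (t*t - 1 - (i - 2*t))%t
  set d4 := (t*t - 1 - (j - 2*t))/t
  set r4 := (t*t - 1 - (j - 2*t))%t
  clear_value d1 r1 d2 r2 d3 r3 d4 r4
  split_ifs at h <;> rw [Prod.mk.injEq] at h <;> obtain ⟨h1, h2⟩ := h
  all_goals try exact ⟨by omega, by omega⟩
  all_goals
    first
      | (refine ⟨by omega, ?_⟩
         have key : i - 2*t = j - 2*t := by
           rw [← e1, ← e2, (by omega : d1 = d2), (by omega : r1 = r2)]
         omega)
      | (refine ⟨by omega, ?_⟩
         have key : t*t - 1 - (i - 2*t) = t*t - 1 - (j - 2*t) := by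
           rw [← e3, ← e4, (by omega : d3 = d4), (by omega : r3 = r4)]
         omega)
      | (exfalso
         have key : i - 2*t = t*t - 1 - (j - 2*t) := by
           rw [← e1, ← e4, (by omega : d1 = d4), (by omega : r1 = r4)]
         omega)
      | (exfalso
         have key : t*t - 1 - (i - 2*t) = j - 2*t := by
           rw [← e3, ← e2, (by omega : d3 = d2), (by omega : r3 = r2)]
         omega)

/-- Full vertex colour code. -/
def dcode (t l : ℕ) (v : Fin 2 × Option (Fin l)) : ℕ × ℕ :=
  match v.2 with
  | none => (v.1.val, v.1.val)
  | some i => pcL t v.1.val i.val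

lemma dcode_lt (t l : ℕ) (ht : 1 ≤ t) (hl : l ≤ t*t + 2*t) (v : Fin 2 × Option (Fin l)) :
    (dcode t l v).1 < t + 2 ∧ (dcode t l v).2 < t + 2 := by
  obtain ⟨s, o⟩ := v
  cases o with
  | none =>
    have := s.isLt
    constructor <;> simp only [dcode] <;> omega
  | some i =>
    have := i.isLt
    exact pcL_lt t s.val i.val ht (by omega)

lemma dcode_center_ne_leaf (t l : ℕ) (s : Fin 2) (j : Fin l) :
    (dcode t l (s, none)).1 ≠ (dcode t l (s, some j)).1 ∧
    (dcode t l (s, none)).2 ≠ (dcode t l (s, some j)).2 := by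
  simp only [dcode]
  have := s.isLt
  have hs2 : s.val = 0 ∨ s.val = 1 := by omega
  rcases hs2 with h | h <;> rw [h]
  · exact ⟨fun hc => (pcL_zero_ne t j.val).1 hc.symm,
      fun hc => (pcL_zero_ne t j.val).2 hc.symm⟩
  · exact ⟨fun hc => (pcL_one_ne t j.val).1 hc.symm,
      fun hc => (pcL_one_ne t j.val).2 hc.symm⟩

lemma dcode_rel_ne (t l : ℕ) (u v : Fin 2 × Option (Fin l))
    (hrel : (u = (0, none) ∧ v = (1, none)) ∨ (u.2 = none ∧ v.1 = u.1 ∧ v.2 ≠ none)) :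
    (dcode t l u).1 ≠ (dcode t l v).1 ∧ (dcode t l u).2 ≠ (dcode t l v).2 := by
  rcases hrel with ⟨h1, h2⟩ | ⟨h1, h2, h3⟩
  · subst h1; subst h2
    constructor <;> simp [dcode]
  · obtain ⟨j, hj⟩ := Option.ne_none_iff_exists'.mp h3
    have hu : u = (u.1, none) := Prod.ext rfl h1
    have hv : v = (u.1, some j) := Prod.ext h2 hj
    rw [hu, hv]
    exact dcode_center_ne_leaf t l u.1 j

lemma dcode_inj (t l : ℕ) (ht : 1 ≤ t) (hl2 : 2*l ≤ t*t + 4*t) :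
    Function.Injective (dcode t l) := by
  rintro ⟨s, o⟩ ⟨s', o'⟩ h
  cases o with
  | none =>
    cases o' with
    | none =>
      simp only [dcode, Prod.mk.injEq] at h
      exact Prod.ext (Fin.val_injective h.1) rfl
    | some j =>
      exfalso
      simp only [dcode] at h
      have hc := pcL_ne_center t s'.val j.val s'.isLt
      have hslt := s.isLt
      have hs2 : s.val = 0 ∨ s.val = 1 := by omega
      rcases hs2 with h0 | h0 <;> rw [h0] at h
      · exact hc.1 h.symm
      · exact hc.2 h.symm
  | some i =>
    cases o' with
    | none =>
      exfalso
      simp only [dcode] at h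
      have hc := pcL_ne_center t s.val i.val s.isLt
      have hslt := s'.isLt
      have hs2 : s'.val = 0 ∨ s'.val = 1 := by omega
      rcases hs2 with h0 | h0 <;> rw [h0] at h
      · exact hc.1 h
      · exact hc.2 h
    | some j =>
      simp only [dcode] at h
      obtain ⟨hs, hij⟩ :=
        pcL_inj t l s.val s'.val i.val j.val ht s.isLt s'.isLt i.isLt j.isLt hl2 h
      exact Prod.ext (Fin.val_injective hs)
        (congrArg some (Fin.val_injective hij))

end DSAux

/-- For even `m ≥ 4` and `N = ⌈√m⌉`, if `m < N² - 1` then the double star `D_m`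
(here `doubleStar (m/2 - 1)`) admits two orthogonal proper colourings each using
at most `N` colours, so `Oχ(D_m) = N`. -/
theorem orthChromatic_doubleStar_of_lt (m : ℕ) (hm : 4 ≤ m) (hme : Even m)
    (N : ℕ) (hN : N = ⌈Real.sqrt m⌉₊) (hlt : m < N ^ 2 - 1) :
    HasOrthColoring (doubleStar (m / 2 - 1)) N ∧
    IsLeast {k | HasOrthColoring (doubleStar (m / 2 - 1)) k} N := by
  obtain ⟨r, hr⟩ := hme
  set l := m / 2 - 1 with hl
  have hm2 : m + 2 ≤ N * N := by
    have h1 : m < N * N - 1 := by rw [← pow_two]; exact hlt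
    set q := N * N
    clear_value q
    omega
  have hN3 : 3 ≤ N := by
    by_contra hc
    push_neg at hc
    have : N * N ≤ 2 * 2 := Nat.mul_le_mul (by omega) (by omega)
    omega
  set t := N - 2 with hts
  have htN : N = t + 2 := by omega
  have ht : 1 ≤ t := by omega
  have hml : m = 2 * (l + 1) := by omega
  have htt : (t + 2) * (t + 2) = t*t + 4*t + 4 := by ring
  have hl2 : 2 * l ≤ t*t + 4*t := by
    have : m + 2 ≤ t*t + 4*t + 4 := by rw [← htt, ← htN]; exact hm2
    omega
  have hl1 : l ≤ t*t + 2*t := by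
    have : 0 ≤ t*t := Nat.zero_le _
    omega
  have hupper : HasOrthColoring (doubleStar l) N := by
    refine ⟨fun v => ⟨(DSAux.dcode t l v).1, by
        rw [htN]; exact (DSAux.dcode_lt t l ht hl1 v).1⟩,
      fun v => ⟨(DSAux.dcode t l v).2, by
        rw [htN]; exact (DSAux.dcode_lt t l ht hl1 v).2⟩, ?_, ?_, ?_⟩
    · intro u v huv
      rw [doubleStar, SimpleGraph.fromRel_adj] at huv
      obtain ⟨hne, hrel | hrel⟩ := huv
      · exact fun hc => (DSAux.dcode_rel_ne t l u v hrel).1 (congrArg Fin.val hc)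
      · exact fun hc => (DSAux.dcode_rel_ne t l v u hrel).1 (congrArg Fin.val hc).symm
    · intro u v huv
      rw [doubleStar, SimpleGraph.fromRel_adj] at huv
      obtain ⟨hne, hrel | hrel⟩ := huv
      · exact fun hc => (DSAux.dcode_rel_ne t l u v hrel).2 (congrArg Fin.val hc)
      · exact fun hc => (DSAux.dcode_rel_ne t l v u hrel).2 (congrArg Fin.val hc).symm
    · intro u v huv
      apply DSAux.dcode_inj t l ht hl2
      simp only [Prod.mk.injEq] at huv
      exact Prod.ext (congrArg Fin.val huv.1) (congrArg Fin.val huv.2)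
  refine ⟨hupper, hupper, ?_⟩
  intro k hk
  obtain ⟨c₁, c₂, _, _, hinj⟩ := hk
  have hcard : Fintype.card (Fin 2 × Option (Fin l)) ≤ Fintype.card (Fin k × Fin k) :=
    Fintype.card_le_of_injective _ hinj
  simp only [Fintype.card_prod, Fintype.card_fin, Fintype.card_option] at hcard
  have hmk : m ≤ k * k := by omega
  rw [hN, Nat.ceil_le]
  have h1 : (m : ℝ) ≤ (k : ℝ)^2 := by
    rw [sq]
    exact_mod_cast hmk
  calc Real.sqrt m ≤ Real.sqrt ((k : ℝ)^2) := Real.sqrt_le_sqrt h1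
    _ = k := Real.sqrt_sq (by positivity)
end

section
/- Let m ≥ 4 be even and set N = ⌈√m⌉. If m ≥ N² − 1, then the double star D_m admits no pair of orthogonal proper colourings each using at most N colours (so Oχ(D_m) > N). -/
lemma doubleStar_vertex_cases {l : ℕ} (w : Fin 2 × Option (Fin l)) :
    w = (0, none) ∨ w = (1, none) ∨ (∃ j, w = (0, some j)) ∨ (∃ j, w = (1, some j)) := by
  obtain ⟨i, o⟩ := w
  fin_cases i <;> cases o <;> simp

lemma no_coloring (m N : ℕ) (hm : 4 ≤ m) (hme : Even m) (h2N : 2 ≤ N)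
    (hge : N ^ 2 - 1 ≤ m) : ¬ HasOrthColoring (doubleStar (m / 2 - 1)) N := by
  rintro ⟨c₁, c₂, h₁, h₂, hinj⟩
  classical
  have huv : (doubleStar (m / 2 - 1)).Adj (0, none) (1, none) := by
    simp [doubleStar, SimpleGraph.fromRel_adj]
  have hadj0 : ∀ i : Fin (m / 2 - 1),
      (doubleStar (m / 2 - 1)).Adj (0, none) (0, some i) := by
    intro i; simp [doubleStar, SimpleGraph.fromRel_adj]
  have hadj1 : ∀ i : Fin (m / 2 - 1),
      (doubleStar (m / 2 - 1)).Adj (1, none) (1, some i) := by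
    intro i; simp [doubleStar, SimpleGraph.fromRel_adj]
  set p : Fin N × Fin N := (c₁ (0, none), c₂ (1, none)) with hp
  set q : Fin N × Fin N := (c₁ (1, none), c₂ (0, none)) with hq
  have hpq : p ≠ q := fun h => h₁ huv (congrArg Prod.fst h)
  have havoid : ∀ w : Fin 2 × Option (Fin (m / 2 - 1)),
      (c₁ w, c₂ w) ≠ p ∧ (c₁ w, c₂ w) ≠ q := by
    intro w
    rcases doubleStar_vertex_cases w with rfl | rfl | ⟨j, rfl⟩ | ⟨j, rfl⟩
    · exact ⟨fun h => h₂ huv (congrArg Prod.snd h),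
        fun h => h₁ huv (congrArg Prod.fst h)⟩
    · exact ⟨fun h => h₁ huv (congrArg Prod.fst h).symm,
        fun h => h₂ huv (congrArg Prod.snd h).symm⟩
    · exact ⟨fun h => h₁ (hadj0 j) (congrArg Prod.fst h).symm,
        fun h => h₂ (hadj0 j) (congrArg Prod.snd h).symm⟩
    · exact ⟨fun h => h₂ (hadj1 j) (congrArg Prod.snd h).symm,
        fun h => h₁ (hadj1 j) (congrArg Prod.fst h).symm⟩
  have hcardV : Fintype.card (Fin 2 × Option (Fin (m / 2 - 1))) = m := by
    simp only [Fintype.card_prod, Fintype.card_option, Fintype.card_fin]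
    obtain ⟨t, ht⟩ := hme
    omega
  have himg : (Finset.univ.image fun w => (c₁ w, c₂ w)) ⊆
      (Finset.univ \ ({p, q} : Finset (Fin N × Fin N))) := by
    intro x hx
    simp only [Finset.mem_image] at hx
    obtain ⟨w, _, rfl⟩ := hx
    simp only [Finset.mem_sdiff, Finset.mem_univ, Finset.mem_insert, Finset.mem_singleton,
      true_and, not_or]
    exact havoid w
  have h1 : (Finset.univ.image fun w => (c₁ w, c₂ w)).card = m := by
    rw [Finset.card_image_of_injective _ hinj, Finset.card_univ, hcardV]
  have h2 : (Finset.univ \ ({p, q} : Finset (Fin N × Fin N))).card = N ^ 2 - 2 := by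
    rw [Finset.card_sdiff_of_subset (by simp), Finset.card_univ]
    rw [Finset.card_insert_of_notMem (by simpa using hpq), Finset.card_singleton]
    simp [Fintype.card_prod, sq]
  have hle := Finset.card_le_card himg
  rw [h1, h2] at hle
  have h4 : 4 ≤ N ^ 2 := by nlinarith
  omega

/-- For even `m ≥ 4` and `N = ⌈√m⌉`, if `m ≥ N² - 1` then the double star `D_m`
(here `doubleStar (m/2 - 1)`) has no pair of orthogonal proper colourings each using
at most `N` colours, so `Oχ(D_m) > N`. -/
theorem orthChromatic_doubleStar_of_ge (m : ℕ) (hm : 4 ≤ m) (hme : Even m)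
    (N : ℕ) (hN : N = ⌈Real.sqrt m⌉₊) (hge : N ^ 2 - 1 ≤ m) :
    ¬ HasOrthColoring (doubleStar (m / 2 - 1)) N ∧
    ∀ k, HasOrthColoring (doubleStar (m / 2 - 1)) k → N < k := by
  have h2N : 2 ≤ N := by
    have h4 : (2:ℝ) ≤ Real.sqrt m := by
      have : (4:ℝ) ≤ m := by exact_mod_cast hm
      nlinarith [Real.sq_sqrt (by linarith : (0:ℝ) ≤ (m:ℝ)), Real.sqrt_nonneg (m:ℝ)]
    calc 2 = ⌈(2:ℝ)⌉₊ := by simp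
    _ ≤ ⌈Real.sqrt m⌉₊ := Nat.ceil_le_ceil h4
    _ = N := hN.symm
  have key := no_coloring m N hm hme h2N hge
  refine ⟨key, fun k hk => ?_⟩
  by_contra hcon
  push_neg at hcon
  apply key
  obtain ⟨c₁, c₂, hc₁, hc₂, hinj⟩ := hk
  refine ⟨fun w => Fin.castLE hcon (c₁ w), fun w => Fin.castLE hcon (c₂ w),
    fun a b hab h => hc₁ hab (Fin.castLE_injective hcon h),
    fun a b hab h => hc₂ hab (Fin.castLE_injective hcon h), ?_⟩
  intro x y hxy
  simp only [Prod.mk.injEq] at hxy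
  exact hinj (Prod.ext (Fin.castLE_injective hcon hxy.1) (Fin.castLE_injective hcon hxy.2))
end

section
/- For every odd n ≥ 3 there exists a tree T with n² vertices and maximum degree Δ(T) < n²/2 such that Oχ(T) = n + 1. -/
open Finset SimpleGraph Function

lemma Finset.exists_disjoint_subsets_card_eq_s13 {α : Type*} [DecidableEq α] {X Y : Finset α} {a : ℕ}
    (hX : 2 * a ≤ #X) (hY : a ≤ #Y) :
    ∃ P ⊆ X, ∃ Q ⊆ Y, Disjoint P Q ∧ #P = a ∧ #Q = a := by
  obtain ⟨Q, hQY, hQ⟩ := exists_subset_card_eq hY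
  obtain ⟨P, hPX, hP⟩ := exists_subset_card_eq (s := X \ Q) (n := a)
    (by have := le_card_sdiff Q X; omega)
  exact ⟨P, hPX.trans sdiff_subset, Q, hQY, disjoint_of_subset_left hPX sdiff_disjoint, hP, hQ⟩

section Grid

variable {α β : Type*} [Fintype α] [DecidableEq α] [Fintype β] [DecidableEq β]

def offLines (c : α × β) : Finset (α × β) := (univ.erase c.1) ×ˢ (univ.erase c.2)

@[simp] lemma mem_offLines {c d : α × β} : d ∈ offLines c ↔ d.1 ≠ c.1 ∧ d.2 ≠ c.2 := by
  simp [offLines]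

lemma mem_offLines_comm {c d : α × β} : d ∈ offLines c ↔ c ∈ offLines d := by
  simp only [mem_offLines, ne_comm]

lemma card_offLines (c : α × β) :
    #(offLines c) = (Fintype.card α - 1) * (Fintype.card β - 1) := by
  simp [offLines, card_erase_of_mem]

end Grid

lemma exists_ne_ne_notMem_offLines {k : ℕ} (hk : 3 ≤ k) (p q : Fin k × Fin k) :
    ∃ r, r ≠ p ∧ r ≠ q ∧ r ∉ offLines p ∧ r ∉ offLines q := by
  have h3 : 3 ≤ ENat.card (Fin k) := by simpa using hk
  by_cases h₁ : p.1 = q.1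
  · obtain ⟨j, hjp, hjq⟩ := ENat.exists_ne_ne_of_three_le h3 p.2 q.2
    refine ⟨(p.1, j), ?_, ?_, ?_, ?_⟩ <;> simp [Prod.ext_iff, *]
  by_cases h₂ : p.2 = q.2
  · obtain ⟨i, hip, hiq⟩ := ENat.exists_ne_ne_of_three_le h3 p.1 q.1
    refine ⟨(i, p.2), ?_, ?_, ?_, ?_⟩ <;> simp [Prod.ext_iff, *]
  refine ⟨(p.1, q.2), ?_, ?_, ?_, ?_⟩ <;> simp [Prod.ext_iff, h₁, Ne.symm h₂]

section OrthColoring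

variable {V : Type*} {G : SimpleGraph V} {k : ℕ}

lemma hasOrthColoring_iff_exists_injective :
    HasOrthColoring G k ↔
      ∃ f : V → Fin k × Fin k, Injective f ∧ ∀ ⦃x y⦄, G.Adj x y → f y ∈ offLines (f x) := by
  constructor
  · rintro ⟨c₁, c₂, h₁, h₂, hinj⟩
    exact ⟨fun v => (c₁ v, c₂ v), hinj, fun x y h => by simp [Ne.symm (h₁ h), Ne.symm (h₂ h)]⟩
  · rintro ⟨f, hinj, hf⟩
    exact ⟨fun v => (f v).1, fun v => (f v).2, fun x y h => ((mem_offLines.1 (hf h)).1).symm,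
      fun x y h => ((mem_offLines.1 (hf h)).2).symm, hinj⟩

lemma HasOrthColoring.mono {l : ℕ} (h : HasOrthColoring G k) (hkl : k ≤ l) :
    HasOrthColoring G l := by
  obtain ⟨c₁, c₂, h₁, h₂, hinj⟩ := h
  refine ⟨Fin.castLE hkl ∘ c₁, Fin.castLE hkl ∘ c₂, fun x y h => ?_, fun x y h => ?_, ?_⟩
  · exact (Fin.castLE_injective hkl).ne (h₁ h)
  · exact (Fin.castLE_injective hkl).ne (h₂ h)
  · intro x y hxy
    simp only [comp_apply, Prod.mk.injEq, Fin.castLE_inj] at hxy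
    exact hinj (Prod.ext hxy.1 hxy.2)

lemma not_hasOrthColoring_of_forall_adj_or_adj [Finite V] (hk : 3 ≤ k) (hV : Nat.card V = k ^ 2)
    {u v : V} (hdom : ∀ x, x ≠ u → x ≠ v → G.Adj u x ∨ G.Adj v x) :
    ¬ HasOrthColoring G k := by
  rw [hasOrthColoring_iff_exists_injective]
  rintro ⟨f, hinj, hf⟩
  have hsurj : Surjective f := (hinj.bijective_of_nat_card_le (by simp [hV, sq])).2
  obtain ⟨r, hru, hrv, hr_u, hr_v⟩ := exists_ne_ne_notMem_offLines hk (f u) (f v)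
  obtain ⟨x, rfl⟩ := hsurj r
  rcases hdom x (by rintro rfl; exact hru rfl) (by rintro rfl; exact hrv rfl) with h | h
  · exact hr_u (hf h)
  · exact hr_v (hf h)

end OrthColoring

section ParentGraph

variable {V : Type*} (p : V → V)

def parentGraph : SimpleGraph V := SimpleGraph.fromRel fun x y => p x = y

variable {p}

@[simp] lemma parentGraph_adj {x y : V} :
    (parentGraph p).Adj x y ↔ x ≠ y ∧ (p x = y ∨ p y = x) :=
  Iff.rfl

lemma hasOrthColoring_parentGraph {k : ℕ} (f : V → Fin k × Fin k)
    (hf : Injective f) (hpf : ∀ x, p x ≠ x → f x ∈ offLines (f (p x))) :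
    HasOrthColoring (parentGraph p) k := by
  refine hasOrthColoring_iff_exists_injective.2 ⟨f, hf, ?_⟩
  rintro x y ⟨hne, rfl | rfl⟩
  · exact mem_offLines_comm.1 (hpf x (Ne.symm hne))
  · exact hpf y hne

variable {r : V → ℕ} (hr : ∀ x, p x ≠ x → r (p x) < r x)
include hr

lemma eq_of_parentGraph_adj_of_le {x y : V} (h : (parentGraph p).Adj x y) (hyx : r y ≤ r x) :
    p x = y := by
  obtain ⟨hne, hxy | hyx'⟩ := h
  · exact hxy
  · exact absurd (hr y (hyx' ▸ hne)) (hyx' ▸ hyx.not_gt)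

/-- On a cycle, both cycle-neighbours of a vertex of maximal rank would have to be its parent. -/
lemma parentGraph_isAcyclic : (parentGraph p).IsAcyclic := by
  classical
  intro v c hc
  obtain ⟨x, hx, hmax⟩ := c.support.toFinset.exists_max_image r ⟨v, by simp⟩
  rw [List.mem_toFinset] at hx
  have hmax' : ∀ y ∈ (c.rotate x hx).support, r y ≤ r x := fun y hy =>
    hmax y (List.mem_toFinset.2 ((c.mem_support_rotate_iff _ hx).1 hy))
  have hc' := hc.rotate hx
  have hsnd := eq_of_parentGraph_adj_of_le hr (Walk.adj_snd hc'.not_nil)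
    (hmax' _ (Walk.getVert_mem_support _ _))
  have hpen := eq_of_parentGraph_adj_of_le hr (Walk.adj_penultimate hc'.not_nil).symm
    (hmax' _ (Walk.getVert_mem_support _ _))
  exact hc'.snd_ne_penultimate (hsnd.symm.trans hpen)

lemma parentGraph_connected (root : V) (hroot : ∀ x, p x = x → x = root) :
    (parentGraph p).Connected := by
  refine (connected_iff_exists_forall_reachable _).2 ⟨root, fun x => ?_⟩
  induction x using (measure r).wf.induction with
  | _ x ih =>
    by_cases hx : p x = x
    · rw [hroot x hx]
    · exact (ih (p x) (hr x hx)).trans (parentGraph_adj.2 ⟨Ne.symm hx, Or.inl rfl⟩).reachable.symm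

end ParentGraph

section SubdividedDoubleStar

variable (A B : Type*)

/-- The path `0 – 1 – 2` on `Fin 3`, with a leaf hanging from `0` for each `a : A` and from `2`
for each `b : B`; every vertex points to its neighbour towards the root `0`. -/
def subdividedDoubleStarParent : Fin 3 ⊕ (A ⊕ B) → Fin 3 ⊕ (A ⊕ B)
  | .inl i => .inl (if i = 2 then 1 else 0)
  | .inr (.inl _) => .inl 0
  | .inr (.inr _) => .inl 2

def subdividedDoubleStarDepth : Fin 3 ⊕ (A ⊕ B) → ℕ := Sum.elim Fin.val fun _ => 3

def subdividedDoubleStar : SimpleGraph (Fin 3 ⊕ (A ⊕ B)) :=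
  parentGraph (subdividedDoubleStarParent A B)

variable {A B}

lemma subdividedDoubleStarParent_eq_self {x : Fin 3 ⊕ (A ⊕ B)} :
    subdividedDoubleStarParent A B x = x ↔ x = .inl 0 := by
  rcases x with i | a | b
  · fin_cases i <;> simp [subdividedDoubleStarParent]
  all_goals simp [subdividedDoubleStarParent]

lemma subdividedDoubleStarDepth_parent_lt (x : Fin 3 ⊕ (A ⊕ B))
    (hx : subdividedDoubleStarParent A B x ≠ x) :
    subdividedDoubleStarDepth A B (subdividedDoubleStarParent A B x) <
      subdividedDoubleStarDepth A B x := by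
  rcases x with i | a | b
  · fin_cases i <;> simp_all [subdividedDoubleStarParent, subdividedDoubleStarDepth]
  all_goals simp [subdividedDoubleStarParent, subdividedDoubleStarDepth]

lemma subdividedDoubleStar_isAcyclic : (subdividedDoubleStar A B).IsAcyclic :=
  parentGraph_isAcyclic subdividedDoubleStarDepth_parent_lt

lemma subdividedDoubleStar_connected : (subdividedDoubleStar A B).Connected :=
  parentGraph_connected subdividedDoubleStarDepth_parent_lt _
    fun _ => subdividedDoubleStarParent_eq_self.1

lemma subdividedDoubleStar_adj_or_adj {x : Fin 3 ⊕ (A ⊕ B)} (h₀ : x ≠ .inl 0) (h₂ : x ≠ .inl 2) :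
    (subdividedDoubleStar A B).Adj (.inl 0) x ∨ (subdividedDoubleStar A B).Adj (.inl 2) x := by
  rcases x with i | a | b
  · fin_cases i <;> simp_all [subdividedDoubleStar, subdividedDoubleStarParent]
  all_goals simp [subdividedDoubleStar, subdividedDoubleStarParent]

lemma ncard_neighborSet_subdividedDoubleStar_le [Finite A] [Finite B] [Nonempty A]
    (x : Fin 3 ⊕ (A ⊕ B)) :
    ((subdividedDoubleStar A B).neighborSet x).ncard ≤ max (Nat.card A) (Nat.card B) + 1 := by
  have hA : 0 < Nat.card A := Nat.card_pos
  have hle (y) (S : Set (Fin 3 ⊕ (A ⊕ B)))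
      (hx : (subdividedDoubleStar A B).neighborSet x ⊆ insert y S) :
      ((subdividedDoubleStar A B).neighborSet x).ncard ≤ S.ncard + 1 :=
    (Set.ncard_le_ncard hx).trans (Set.ncard_insert_le _ _)
  rcases x with i | a | b
  · fin_cases i
    · refine (hle (.inl 1) (Set.range (.inr ∘ .inl)) ?_).trans ?_
      · rintro (j | a | b) <;> [fin_cases j; skip; skip] <;>
          simp [subdividedDoubleStar, subdividedDoubleStarParent]
      · rw [Set.ncard_range_of_injective (Sum.inr_injective.comp Sum.inl_injective)]
        omega
    · refine (hle (.inl 0) {.inl 2} ?_).trans (by simp; omega)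
      rintro (j | a | b) <;> [fin_cases j; skip; skip] <;>
        simp [subdividedDoubleStar, subdividedDoubleStarParent]
    · refine (hle (.inl 1) (Set.range (.inr ∘ .inr)) ?_).trans ?_
      · rintro (j | a | b) <;> [fin_cases j; skip; skip] <;>
          simp [subdividedDoubleStar, subdividedDoubleStarParent]
      · rw [Set.ncard_range_of_injective (Sum.inr_injective.comp Sum.inr_injective)]
        omega
  · refine (hle (.inl 0) ∅ ?_).trans (by simp)
    rintro (j | a | b) <;> [fin_cases j; skip; skip] <;>
      simp [subdividedDoubleStar, subdividedDoubleStarParent]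
  · refine (hle (.inl 2) ∅ ?_).trans (by simp)
    rintro (j | a | b) <;> [fin_cases j; skip; skip] <;>
      simp [subdividedDoubleStar, subdividedDoubleStarParent]

end SubdividedDoubleStar

section DiagonalSpine

variable {k : ℕ} (hk : 3 ≤ k)

def diagCell (i : Fin 3) : Fin k × Fin k := (Fin.castLE hk i, Fin.castLE hk i)

lemma diagCell_injective : Injective (diagCell hk) := fun _ _ h =>
  Fin.castLE_injective hk (congrArg Prod.fst h)

lemma diagCell_mem_offLines_diagCell {i j : Fin 3} (hij : i ≠ j) :
    diagCell hk i ∈ offLines (diagCell hk j) := by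
  simp [diagCell, hij]

lemma le_card_offLines_diagCell_sdiff (i : Fin 3) :
    (k - 1) * (k - 1) - 3 ≤ #(offLines (diagCell hk i) \ univ.image (diagCell hk)) := by
  have hspine : #(univ.image (diagCell hk)) ≤ 3 := card_image_le.trans (by simp)
  have := le_card_sdiff (univ.image (diagCell hk)) (offLines (diagCell hk i))
  rw [card_offLines, Fintype.card_fin] at this
  omega

lemma hasOrthColoring_subdividedDoubleStar {P Q : Finset (Fin k × Fin k)} (hPQ : Disjoint P Q)
    (hP : P ⊆ offLines (diagCell hk 0) \ univ.image (diagCell hk))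
    (hQ : Q ⊆ offLines (diagCell hk 2) \ univ.image (diagCell hk)) :
    HasOrthColoring (subdividedDoubleStar P Q) k := by
  have hPQ' : ∀ (c : P) (d : Q), (c : Fin k × Fin k) ≠ d := fun c d h =>
    disjoint_left.1 hPQ c.2 (h ▸ d.2)
  have hspine : ∀ i (x : P ⊕ Q), diagCell hk i ≠ Sum.elim (↑) (↑) x := by
    rintro i (c | d) h
    · exact (mem_sdiff.1 (hP c.2)).2 (mem_image.2 ⟨i, mem_univ _, h⟩)
    · exact (mem_sdiff.1 (hQ d.2)).2 (mem_image.2 ⟨i, mem_univ _, h⟩)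
  refine hasOrthColoring_parentGraph (Sum.elim (diagCell hk) (Sum.elim (↑) (↑)))
    ((diagCell_injective hk).sumElim (Subtype.val_injective.sumElim Subtype.val_injective hPQ')
      hspine) ?_
  rintro (i | c | d) hx
  · fin_cases i
    · simp [subdividedDoubleStarParent] at hx
    all_goals exact diagCell_mem_offLines_diagCell hk (by decide)
  · exact (mem_sdiff.1 (hP c.2)).1
  · exact (mem_sdiff.1 (hQ d.2)).1

end DiagonalSpine

/-- For every odd `n ≥ 3` there is a tree `T` with `n²` vertices and maximum degree
`Δ(T) < n²/2` (equivalently, every degree `< n²/2`) such that `Oχ(T) = n + 1`. -/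
theorem exists_tree_orthChromatic_succ (n : ℕ) (hn : Odd n) (hn3 : 3 ≤ n) :
    ∃ (V : Type) (T : SimpleGraph V),
      Nat.card V = n ^ 2 ∧ T.Connected ∧ T.IsAcyclic ∧
      (∀ v : V, 2 * (T.neighborSet v).ncard < n ^ 2) ∧
      IsLeast {k | HasOrthColoring T k} (n + 1) := by
  have hk : 3 ≤ n + 1 := by omega
  have hodd : n ^ 2 % 2 = 1 := Nat.odd_iff.1 hn.pow
  have h9 : 9 ≤ n ^ 2 := by nlinarith
  have hX := le_card_offLines_diagCell_sdiff hk 0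
  have hY := le_card_offLines_diagCell_sdiff hk 2
  rw [Nat.add_sub_cancel, ← sq] at hX hY
  obtain ⟨P, hP, Q, hQ, hPQ, hPa, hQa⟩ :=
    exists_disjoint_subsets_card_eq_s13 (a := (n ^ 2 - 3) / 2) (hX.trans' (by omega))
      (hY.trans' (by omega))
  have hcard : Nat.card (Fin 3 ⊕ (P ⊕ Q)) = n ^ 2 := by simp [hPa, hQa]; omega
  have : Nonempty P := (card_pos.1 (by omega)).coe_sort
  refine ⟨_, subdividedDoubleStar P Q, hcard, subdividedDoubleStar_connected,
    subdividedDoubleStar_isAcyclic, fun x => ?_, hasOrthColoring_subdividedDoubleStar hk hPQ hP hQ,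
    fun k hk' => ?_⟩
  · have := ncard_neighborSet_subdividedDoubleStar_le x
    simp only [Nat.card_eq_fintype_card, Fintype.card_coe, hPa, hQa, max_self] at this
    omega
  · by_contra! hkn
    exact not_hasOrthColoring_of_forall_adj_or_adj hn3 hcard
      (fun _ => subdividedDoubleStar_adj_or_adj) (HasOrthColoring.mono hk' (by omega))
end

section
/- Let G be a d-degenerate simple graph with n vertices whose maximum degree satisfies Δ(G) < (√n − 2d − 1)/2. Then Oχ(G) = ⌈√n⌉. -/
open Finset

variable {V α β : Type*}

theorem card_filter_fst_eq_le_of_injOn [DecidableEq α] [Fintype β] {s : Finset V}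
    {c : V → α × β} {q : α × β} (hc : Set.InjOn c s) (hq : ∀ u ∈ s, c u ≠ q) :
    #(s.filter fun u => (c u).1 = q.1) ≤ Fintype.card β - 1 := by
  classical
  rw [← card_univ, ← card_erase_of_mem (mem_univ q.2)]
  refine card_le_card_of_injOn (fun u => (c u).2) (fun u hu => ?_) (fun x hx y hy hxy => ?_)
  · simp only [mem_coe, mem_filter] at hu
    exact mem_erase.2 ⟨fun h => hq u hu.1 (Prod.ext hu.2 h), mem_univ _⟩
  · simp only [mem_coe, mem_filter] at hx hy
    exact hc hx.1 hy.1 (Prod.ext (hx.2.trans hy.2.symm) hxy)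

theorem card_filter_fst_eq_or_snd_eq_le_of_injOn [DecidableEq α] [DecidableEq β] [Fintype α]
    [Fintype β] {s : Finset V} {c : V → α × β} {q : α × β} (hc : Set.InjOn c s)
    (hq : ∀ u ∈ s, c u ≠ q) :
    #(s.filter fun u => (c u).1 = q.1 ∨ (c u).2 = q.2) ≤
      (Fintype.card β - 1) + (Fintype.card α - 1) := by
  classical
  rw [filter_or]
  refine (card_union_le _ _).trans (add_le_add (card_filter_fst_eq_le_of_injOn hc hq) ?_)
  exact card_filter_fst_eq_le_of_injOn (c := Prod.swap ∘ c) (q := q.swap)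
    (Prod.swap_injective.comp_injOn hc) fun u hu h => hq u hu (Prod.swap_injective h)

theorem mul_lt_sq_of_two_mul_add_two_le {d k : ℕ} (h : 2 * d + 2 ≤ k) :
    (k - 1) * (k - 2 * d - 2) < (k - d) ^ 2 := by
  obtain ⟨t, rfl⟩ : ∃ t, k = t + 2 * d + 2 := ⟨k - 2 * d - 2, by omega⟩
  rw [show t + 2 * d + 2 - 1 = t + 2 * d + 1 by omega, show t + 2 * d + 2 - 2 * d - 2 = t by omega,
    show t + 2 * d + 2 - d = t + d + 2 by omega]
  nlinarith

namespace SimpleGraph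

variable (G : SimpleGraph V)

def IsOrthColoringOn (s : Finset V) (c : V → α × β) : Prop :=
  Set.InjOn c s ∧
    ∀ ⦃u⦄, u ∈ s → ∀ ⦃v⦄, v ∈ s → G.Adj u v →
      (c u).1 ≠ (c v).1 ∧ (c u).2 ≠ (c v).2

variable {G}

theorem IsOrthColoringOn.mono {s t : Finset V} {c : V → α × β} (h : G.IsOrthColoringOn t c)
    (hst : s ⊆ t) : G.IsOrthColoringOn s c :=
  ⟨h.1.mono (by simpa using hst), fun _ hu _ hv huv => h.2 (hst hu) (hst hv) huv⟩

theorem IsOrthColoringOn.update [DecidableEq V] {s : Finset V} {c : V → α × β} {v : V}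
    {p : α × β} (h : G.IsOrthColoringOn s c) (hp : ∀ u ∈ s, c u ≠ p)
    (hadm : ∀ u ∈ s, G.Adj v u → (c u).1 ≠ p.1 ∧ (c u).2 ≠ p.2) :
    G.IsOrthColoringOn (insert v s) (Function.update c v p) := by
  have hmem : ∀ x ∈ insert v s, x ≠ v → x ∈ s := fun x hx hxv =>
    (mem_insert.1 hx).resolve_left hxv
  refine ⟨fun x hx y hy hxy => ?_, fun x hx y hy hxy => ?_⟩
  · by_cases hxv : x = v <;> by_cases hyv : y = v
    · rw [hxv, hyv]
    · subst hxv
      simp only [Function.update_self, Function.update_of_ne hyv] at hxy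
      exact (hp y (hmem y hy hyv) hxy.symm).elim
    · subst hyv
      simp only [Function.update_self, Function.update_of_ne hxv] at hxy
      exact (hp x (hmem x hx hxv) hxy).elim
    · simp only [Function.update_of_ne hxv, Function.update_of_ne hyv] at hxy
      exact h.1 (hmem x hx hxv) (hmem y hy hyv) hxy
  · by_cases hxv : x = v <;> by_cases hyv : y = v
    · exact absurd (hxv ▸ hyv ▸ hxy) (G.irrefl)
    · subst hxv
      simp only [Function.update_self, Function.update_of_ne hyv]
      exact (hadm y (hmem y hy hyv) hxy).imp Ne.symm Ne.symm
    · subst hyv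
      simp only [Function.update_self, Function.update_of_ne hxv]
      exact hadm x (hmem x hx hxv) hxy.symm
    · simp only [Function.update_of_ne hxv, Function.update_of_ne hyv]
      exact h.2 (hmem x hx hxv) (hmem y hy hyv) hxy

section Admissible

variable [Fintype α] [DecidableEq α] [Fintype β] [DecidableEq β] [DecidableRel G.Adj]

variable (G) in
def admissiblePairs (s : Finset V) (c : V → α × β) (v : V) : Finset (α × β) :=
  ((s.filter (G.Adj v)).image fun u => (c u).1)ᶜ ×ˢ
    ((s.filter (G.Adj v)).image fun u => (c u).2)ᶜ

theorem mem_admissiblePairs {s : Finset V} {c : V → α × β} {v : V} {p : α × β} :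
    p ∈ G.admissiblePairs s c v ↔
      ∀ u ∈ s, G.Adj v u → (c u).1 ≠ p.1 ∧ (c u).2 ≠ p.2 := by
  simp only [admissiblePairs, mem_product, mem_compl, mem_image, mem_filter, not_exists,
    not_and]
  grind

theorem card_admissiblePairs_ge {s : Finset V} {c : V → α × β} {v : V} {d : ℕ}
    (hv : #(s.filter (G.Adj v)) ≤ d) :
    (Fintype.card α - d) * (Fintype.card β - d) ≤ #(G.admissiblePairs s c v) := by
  rw [admissiblePairs, card_product, card_compl, card_compl]
  exact Nat.mul_le_mul (Nat.sub_le_sub_left (card_image_le.trans hv) _)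
    (Nat.sub_le_sub_left (card_image_le.trans hv) _)

theorem IsOrthColoringOn.exists_swappable [Fintype V] [DecidableEq V] {s : Finset V}
    {c : V → α × α} {v : V} {q : α × α} {d : ℕ} (hc : G.IsOrthColoringOn s c)
    (hq : ∀ u ∈ s, c u ≠ q) (hfull : G.admissiblePairs s c v ⊆ s.image c)
    (hv : #(s.filter (G.Adj v)) ≤ d)
    (hdeg : ∀ u, 2 * G.degree u + 2 * d + 2 ≤ Fintype.card α) :
    ∃ w ∈ s, c w ∈ G.admissiblePairs s c v ∧ q ∈ G.admissiblePairs s c w := by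
  set k := Fintype.card α
  set W := s.filter fun w => c w ∈ G.admissiblePairs s c v
  set U := s.filter fun u => (c u).1 = q.1 ∨ (c u).2 = q.2
  have hW : (k - d) ^ 2 ≤ #W := calc
    (k - d) ^ 2 ≤ #(G.admissiblePairs s c v) := (sq (k - d)).trans_le (card_admissiblePairs_ge hv)
    _ ≤ #(W.image c) := card_le_card fun p hp => by
      obtain ⟨w, hw, rfl⟩ := mem_image.1 (hfull hp)
      exact mem_image_of_mem c (mem_filter.2 ⟨hw, hp⟩)
    _ ≤ #W := card_image_le
  have hU : #U ≤ 2 * (k - 1) := by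
    refine (card_filter_fst_eq_or_snd_eq_le_of_injOn hc.1 hq).trans ?_
    omega
  have hbad : 2 * #(U.biUnion fun u => G.neighborFinset u) ≤ #U * (k - 2 * d - 2) := calc
    2 * #(U.biUnion fun u => G.neighborFinset u) ≤ 2 * ∑ u ∈ U, G.degree u :=
      Nat.mul_le_mul_left 2 card_biUnion_le
    _ = ∑ u ∈ U, 2 * G.degree u := mul_sum _ _ _
    _ ≤ ∑ _u ∈ U, (k - 2 * d - 2) := sum_le_sum fun u _ => by have := hdeg u; omega
    _ = #U * (k - 2 * d - 2) := by rw [sum_const, smul_eq_mul]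
  have hlt : #(U.biUnion fun u => G.neighborFinset u) < #W := by
    have hk := mul_lt_sq_of_two_mul_add_two_le (d := d) (k := k) (by have := hdeg v; omega)
    have := Nat.mul_le_mul_right (k - 2 * d - 2) hU
    nlinarith
  obtain ⟨w, hwW, hwbad⟩ := exists_mem_notMem_of_card_lt_card hlt
  refine ⟨w, (mem_filter.1 hwW).1, (mem_filter.1 hwW).2,
    mem_admissiblePairs.2 fun u hu hwu => ?_⟩
  exact not_or.1 fun h =>
    hwbad (mem_biUnion.2 ⟨u, mem_filter.2 ⟨hu, h⟩, (G.mem_neighborFinset u w).2 hwu.symm⟩)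

theorem IsOrthColoringOn.exists_insert [Fintype V] [DecidableEq V] {s : Finset V}
    {c : V → α × α} {v : V} {d : ℕ} (hc : G.IsOrthColoringOn s c)
    (hs : #s < Fintype.card α * Fintype.card α) (hv : #(s.filter (G.Adj v)) ≤ d)
    (hdeg : ∀ u, 2 * G.degree u + 2 * d + 2 ≤ Fintype.card α) :
    ∃ c' : V → α × α, G.IsOrthColoringOn (insert v s) c' := by
  by_cases hfree : ∃ p ∈ G.admissiblePairs s c v, ∀ u ∈ s, c u ≠ p
  · obtain ⟨p, hp, hpfree⟩ := hfree
    exact ⟨_, hc.update hpfree (mem_admissiblePairs.1 hp)⟩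
  push Not at hfree
  obtain ⟨q, hq⟩ : ∃ q, ∀ u ∈ s, c u ≠ q := by
    obtain ⟨q, -, hq⟩ := exists_mem_notMem_of_card_lt_card (s := s.image c) (t := univ)
      (card_image_le.trans_lt (by simpa using hs))
    exact ⟨q, fun u hu h => hq (h ▸ mem_image_of_mem c hu)⟩
  obtain ⟨w, hw, hwv, hqw⟩ :=
    hc.exists_swappable hq (fun p hp => mem_image.2 (hfree p hp)) hv hdeg
  -- recolour `w` with the unused pair `q`, then give `v` the old colour of `w`
  have hc₁ : G.IsOrthColoringOn s (Function.update c w q) := by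
    simpa [insert_erase hw] using (hc.mono (erase_subset w s)).update
      (fun u hu => hq u (mem_of_mem_erase hu))
      (fun u hu => mem_admissiblePairs.1 hqw u (mem_of_mem_erase hu))
  refine ⟨_, hc₁.update (p := c w) (fun u hu => ?_) (fun u hu hvu => ?_)⟩
  · by_cases huw : u = w
    · simpa [huw] using (hq w hw).symm
    · rw [Function.update_of_ne huw]
      exact fun h => huw (hc.1 hu hw h)
  · have huw : u ≠ w := by
      rintro rfl
      exact (mem_admissiblePairs.1 hwv u hu hvu).1 rfl
    rw [Function.update_of_ne huw]
    exact mem_admissiblePairs.1 hwv u hu hvu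

end Admissible

theorem exists_isOrthColoringOn_univ_of_degenerate {ι : Type*} [LinearOrder ι] [Fintype V]
    [DecidableRel G.Adj] [Fintype α] [DecidableEq α] {f : V → ι} (hf : Function.Injective f)
    {d : ℕ} (hback : ∀ v, #{u | G.Adj v u ∧ f u < f v} ≤ d)
    (hcard : Fintype.card V ≤ Fintype.card α * Fintype.card α)
    (hdeg : ∀ v, 2 * G.degree v + 2 * d + 2 ≤ Fintype.card α) :
    ∃ c : V → α × α, G.IsOrthColoringOn univ c := by
  classical
  induction (univ : Finset V) using Finset.induction_on_max_value f with
  | empty =>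
    have hα : V → Nonempty α := fun v => Fintype.card_pos_iff.1 (by have := hdeg v; omega)
    exact ⟨fun v => ((hα v).some, (hα v).some), by simp [IsOrthColoringOn]⟩
  | insert v s hv hmax ih =>
    obtain ⟨c, hc⟩ := ih
    refine hc.exists_insert ((card_lt_univ_of_notMem hv).trans_le hcard) ?_ hdeg
    refine le_trans (card_le_card fun u hu => ?_) (hback v)
    obtain ⟨hus, hvu⟩ := mem_filter.1 hu
    exact mem_filter.2 ⟨mem_univ u, hvu, (hmax u hus).lt_of_ne (hf.ne hvu.ne.symm)⟩

theorem IsOrthColoringOn.hasOrthColoring {k : ℕ} [Fintype V] {c : V → Fin k × Fin k}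
    (hc : G.IsOrthColoringOn univ c) : HasOrthColoring G k :=
  ⟨fun v => (c v).1, fun v => (c v).2, fun u v huv => (hc.2 (mem_univ u) (mem_univ v) huv).1,
    fun u v huv => (hc.2 (mem_univ u) (mem_univ v) huv).2,
    fun x y hxy => hc.1 (mem_univ x) (mem_univ y) hxy⟩

end SimpleGraph

theorem HasOrthColoring.card_le {V : Type*} {G : SimpleGraph V} {k : ℕ}
    (h : HasOrthColoring G k) : Nat.card V ≤ k * k := by
  obtain ⟨c₁, c₂, -, -, hinj⟩ := h
  simpa using Nat.card_le_card_of_injective _ hinj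

theorem Nat.ceil_sqrt_le_iff_s15 {n k : ℕ} : ⌈√(n : ℝ)⌉₊ ≤ k ↔ n ≤ k * k := by
  rw [Nat.ceil_le, Real.sqrt_le_left (Nat.cast_nonneg k), ← sq]
  exact_mod_cast Iff.rfl

/-- If `G` is a `d`-degenerate graph with `n` vertices (there is an ordering of the
vertices in which every vertex has at most `d` earlier neighbours) whose maximum degree
satisfies `Δ(G) < (√n - 2d - 1)/2`, then `Oχ(G) = ⌈√n⌉`. -/
theorem orthChromatic_of_degenerate {V : Type} (G : SimpleGraph V) (n d : ℕ)
    (hn : Nat.card V = n)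
    (hdegen : ∃ f : V → ℕ, Function.Injective f ∧
      ∀ v : V, {u : V | G.Adj v u ∧ f u < f v}.ncard ≤ d)
    (hdeg : ∀ v : V, ((G.neighborSet v).ncard : ℝ) < (Real.sqrt n - 2 * d - 1) / 2) :
    IsLeast {k | HasOrthColoring G k} ⌈Real.sqrt n⌉₊ := by
  have : Finite V := by
    by_contra hV
    have : Infinite V := not_finite_iff_infinite.1 hV
    obtain ⟨v⟩ := Infinite.nonempty V
    have hv := hdeg v
    rw [← hn, Nat.card_eq_zero_of_infinite, Nat.cast_zero, Real.sqrt_zero] at hv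
    linarith [(G.neighborSet v).ncard.cast_nonneg (α := ℝ), d.cast_nonneg (α := ℝ)]
  have := Fintype.ofFinite V
  classical
  set k := ⌈√(n : ℝ)⌉₊
  have hdegk (v : V) : 2 * G.degree v + 2 * d + 2 ≤ k := by
    have hv := hdeg v
    rw [← Nat.card_coe_set_eq, Nat.card_eq_fintype_card, G.card_neighborSet_eq_degree] at hv
    exact Nat.lt_ceil.2 (by push_cast; linarith)
  have hcard : Fintype.card V ≤ k * k := by
    rw [← Nat.card_eq_fintype_card, hn]
    exact Nat.ceil_sqrt_le_iff_s15.1 le_rfl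
  obtain ⟨f, hf, hback⟩ := hdegen
  obtain ⟨c, hc⟩ := G.exists_isOrthColoringOn_univ_of_degenerate (α := Fin k) hf
    (fun v => by simpa [Set.ncard_eq_toFinset_card'] using hback v) (by simpa using hcard)
    (by simpa using hdegk)
  exact ⟨hc.hasOrthColoring, fun m hm => Nat.ceil_sqrt_le_iff_s15.2 (hn ▸ hm.card_le)⟩
end

section
/- Let G be a simple graph, let P be a partition of its vertex set into n independent sets, and suppose G has an independent covering with respect to P consisting of k pairwise disjoint independent transversals. Then G admits a pair of orthogonal proper colourings, one using at most n colours and the other using at most k colours; in particular Oχ(G) ≤ max(n, k). -/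
/-- If `P = A` is a partition of the vertices of `G` into `n` independent sets and `G`
has an independent covering with respect to `A` consisting of `k` pairwise disjoint
independent transversals, then `G` has a pair of orthogonal proper colourings, one
using at most `n` colours and one using at most `k` colours; in particular
`Oχ(G) ≤ max n k`. -/
theorem orthColoring_of_indepCovering {V : Type} (G : SimpleGraph V) (n : ℕ)
    (A : Fin n → Finset V)
    (hpart : ∀ v : V, ∃! i, v ∈ A i)
    (hindep : ∀ i, ∀ u ∈ A i, ∀ v ∈ A i, ¬ G.Adj u v)
    (k : ℕ) (T : Fin k → Finset V)
    (hT : ∀ j, IsIndepTransversal G A (T j))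
    (hdisj : Pairwise fun j j' => Disjoint (T j) (T j'))
    (hcov : ∀ v : V, ∃ j, v ∈ T j) :
    (∃ (c₁ : V → Fin n) (c₂ : V → Fin k),
      (∀ ⦃u v⦄, G.Adj u v → c₁ u ≠ c₁ v) ∧
      (∀ ⦃u v⦄, G.Adj u v → c₂ u ≠ c₂ v) ∧
      Function.Injective fun v => (c₁ v, c₂ v)) ∧
    HasOrthColoring G (max n k) := by
  classical
  set c₁ : V → Fin n := fun v => (hpart v).choose with hc₁
  set c₂ : V → Fin k := fun v => (hcov v).choose with hc₂
  have hA : ∀ v, v ∈ A (c₁ v) := fun v => (hpart v).choose_spec.1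
  have hAu : ∀ v i, v ∈ A i → c₁ v = i := fun v i h =>
    ((hpart v).choose_spec.2 i h).symm ▸ rfl
  have hTm : ∀ v, v ∈ T (c₂ v) := fun v => (hcov v).choose_spec
  have h1 : ∀ ⦃u v⦄, G.Adj u v → c₁ u ≠ c₁ v := by
    intro u v hadj heq
    exact hindep (c₁ v) u (heq ▸ hA u) v (hA v) hadj
  have h2 : ∀ ⦃u v⦄, G.Adj u v → c₂ u ≠ c₂ v := by
    intro u v hadj heq
    exact (hT (c₂ v)).1 u (heq ▸ hTm u) v (hTm v) hadj
  have hinj : Function.Injective fun v => (c₁ v, c₂ v) := by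
    intro u v h
    simp only [Prod.mk.injEq] at h
    obtain ⟨w, -, hw⟩ := (hT (c₂ v)).2 (c₁ v)
    have hu : u = w := hw u ⟨h.2 ▸ hTm u, h.1 ▸ hA u⟩
    have hv : v = w := hw v ⟨hTm v, hA v⟩
    rw [hu, hv]
  refine ⟨⟨c₁, c₂, h1, h2, hinj⟩, ?_⟩
  refine ⟨fun v => Fin.castLE (le_max_left n k) (c₁ v),
    fun v => Fin.castLE (le_max_right n k) (c₂ v), ?_, ?_, ?_⟩
  · intro u v hadj heq
    exact h1 hadj (Fin.castLE_injective _ heq)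
  · intro u v hadj heq
    exact h2 hadj (Fin.castLE_injective _ heq)
  · intro u v h
    simp only [Prod.mk.injEq] at h
    exact hinj (Prod.ext (Fin.castLE_injective _ h.1) (Fin.castLE_injective _ h.2))
end
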